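/- arXiv:2206.15028 — 2 statements merged into one kernel-verified Lean document; each statement's English description precedes it below -/
import Mathlib

section
/- Let X be a scheme on Ω satisfying the e₁/e₀-condition, X' a scheme on Ω', and φ : X → X' an algebraic isomorphism. With the notation X₀ = X_{Ω/e₀}, φ₀ = φ_{Ω/e₀}, and for points α ∈ Ω, α' ∈ Ω': α₀ = αe₀, α'₀ = α'e'₀, Δ the class of e₁ containing α, Δ' the class of e'₁ containing α', Δ₀ = Δ/e₀, X₁ = X_Δ, X'₁ = X'_{Δ'}, φ₁ = φ_{Δ,Δ'} — assume that for all α ∈ Ω and α' ∈ Ω' one has Iso_{α₀,α'₀}(X₀, X'₀, φ₀)^{Δ₀} = Iso_{α,α'}(X₁, X'₁, φ₁)^{Δ₀}. Then for all α ∈ Ω and α' ∈ Ω': (i) the set of bijections Ω/e₀ → Ω'/e'₀ induced by elements of Iso_{α,α'}(X, X', φ) equals Iso_{α₀,α'₀}(X₀, X'₀, φ₀), and (ii) the set of restrictions to Δ of elements of Iso_{α,α'}(X, X', φ) equals Iso_{α,α'}(X₁, X'₁, φ₁). -/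
open Set

universe u

/-- A coherent configuration on a finite set `Ω`: a partition `S` of `Ω × Ω`
satisfying (C1) the diagonal is a union of classes, (C2) closure under converse,
(C3) well-defined intersection numbers. -/
structure CohCfg (Ω : Type u) : Type u where
  S : Set (Set (Ω × Ω))
  finite : Finite Ω
  cover : ∀ p : Ω × Ω, ∃ s ∈ S, p ∈ s
  disj : ∀ s ∈ S, ∀ t ∈ S, s ≠ t → s ∩ t = ∅
  nonemp : ∀ s ∈ S, s.Nonempty
  diag : ∀ s ∈ S, (∃ p ∈ s, p.1 = p.2) → ∀ p ∈ s, p.1 = p.2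
  conv : ∀ s ∈ S, {p : Ω × Ω | (p.2, p.1) ∈ s} ∈ S
  inum : ∀ r ∈ S, ∀ s ∈ S, ∀ t ∈ S, ∀ p ∈ t, ∀ q ∈ t,
    {γ : Ω | (p.1, γ) ∈ r ∧ (γ, p.2) ∈ s}.ncard =
    {γ : Ω | (q.1, γ) ∈ r ∧ (γ, q.2) ∈ s}.ncard

namespace CohCfg

variable {Ω Ω' : Type u}

/-- The intersection number `c^t_{rs}` computed at the pair `p`. -/
noncomputable def cnum (r s : Set (Ω × Ω)) (p : Ω × Ω) : ℕ :=
  {γ : Ω | (p.1, γ) ∈ r ∧ (γ, p.2) ∈ s}.ncard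

/-- `X` is a scheme (homogeneous) if the full diagonal is a basis relation. -/
def IsScheme (X : CohCfg Ω) : Prop := {p : Ω × Ω | p.1 = p.2} ∈ X.S

/-- Commutativity: `c^t_{rs} = c^t_{sr}`. -/
def IsCommutative (X : CohCfg Ω) : Prop :=
  ∀ r ∈ X.S, ∀ s ∈ X.S, ∀ p : Ω × Ω, cnum r s p = cnum s r p

/-- `s` is a relation of `X`, i.e. a union of basis relations. -/
def IsRelationOf (X : CohCfg Ω) (s : Set (Ω × Ω)) : Prop :=
  ∀ t ∈ X.S, (t ∩ s).Nonempty → t ⊆ s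

/-- `X ≤ Y`: every (basis) relation of `X` is a relation of `Y`. -/
def le (X Y : CohCfg Ω) : Prop := ∀ s ∈ X.S, IsRelationOf Y s

/-- The diagonal relation `1_Δ` of a subset `Δ`. -/
def diagRel (Δ : Set Ω) : Set (Ω × Ω) := {p | p.1 = p.2 ∧ p.1 ∈ Δ}

/-- `Δ` is a fiber of `X`. -/
def IsFiber (X : CohCfg Ω) (Δ : Set Ω) : Prop := diagRel Δ ∈ X.S

/-- `αs = {β | (α,β) ∈ s}`. -/
def pointSet (s : Set (Ω × Ω)) (α : Ω) : Set Ω := {β | (α, β) ∈ s}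

/-- `X` is partly regular: some point `α` has `|αs| ≤ 1` for all basis relations. -/
def PartlyRegular (X : CohCfg Ω) : Prop :=
  ∃ α : Ω, ∀ s ∈ X.S, (pointSet s α).ncard ≤ 1

/-- The image `s^f` of a relation under a map of points. -/
def relImage (f : Ω → Ω') (s : Set (Ω × Ω)) : Set (Ω' × Ω') :=
  (fun p : Ω × Ω => (f p.1, f p.2)) '' s

/-- `φ` is an algebraic isomorphism from `X` to `X'`. -/
structure IsAlgIso (X : CohCfg Ω) (X' : CohCfg Ω')
    (φ : Set (Ω × Ω) → Set (Ω' × Ω')) : Prop where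
  bijOn : Set.BijOn φ X.S X'.S
  cnum_eq : ∀ r ∈ X.S, ∀ s ∈ X.S, ∀ t ∈ X.S, ∀ p ∈ t, ∀ q ∈ φ t,
    cnum r s p = cnum (φ r) (φ s) q

/-- The natural extension of an algebraic isomorphism to unions of basis relations. -/
def algImage (X : CohCfg Ω) (φ : Set (Ω × Ω) → Set (Ω' × Ω')) (s : Set (Ω × Ω)) :
    Set (Ω' × Ω') := ⋃₀ (φ '' {t | t ∈ X.S ∧ t ⊆ s})

/-- The image `Δ^φ` of a fiber under an algebraic isomorphism. -/
def fiberImage (X : CohCfg Ω) (φ : Set (Ω × Ω) → Set (Ω' × Ω')) (Δ : Set Ω) : Set Ω' :=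
  {α' | (α', α') ∈ φ (diagRel Δ)}

/-- `Y` is the point extension `X_α`: the smallest coherent configuration `≥ X`
having `1_α` as a basis relation. -/
def IsPointExt (X : CohCfg Ω) (α : Ω) (Y : CohCfg Ω) : Prop :=
  le X Y ∧ ({(α, α)} : Set (Ω × Ω)) ∈ Y.S ∧
    ∀ Z : CohCfg Ω, le X Z → ({(α, α)} : Set (Ω × Ω)) ∈ Z.S → le Y Z

/-- `φ` has an `(α,α')`-extension: an algebraic isomorphism `X_α → X'_{α'}`
extending `φ` and sending `1_α` to `1_{α'}`. -/
def HasExtension (X : CohCfg Ω) (X' : CohCfg Ω') (φ : Set (Ω × Ω) → Set (Ω' × Ω'))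
    (α : Ω) (α' : Ω') : Prop :=
  ∃ (Y : CohCfg Ω) (Y' : CohCfg Ω') (ψ : Set (Ω × Ω) → Set (Ω' × Ω')),
    IsPointExt X α Y ∧ IsPointExt X' α' Y' ∧ IsAlgIso Y Y' ψ ∧
    (∀ s ∈ X.S, algImage Y ψ s = φ s) ∧ ψ {(α, α)} = {(α', α')}

/-- A sesquiclosed algebraic isomorphism: has an `(α,α')`-extension for all
`α ∈ Δ ∈ F(X)` and `α' ∈ Δ^φ`. -/
def SesquiclosedIso (X : CohCfg Ω) (X' : CohCfg Ω')
    (φ : Set (Ω × Ω) → Set (Ω' × Ω')) : Prop :=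
  IsAlgIso X X' φ ∧
  ∀ Δ : Set Ω, IsFiber X Δ → ∀ α ∈ Δ, ∀ α' ∈ fiberImage X φ Δ, HasExtension X X' φ α α'

/-- `φ` is induced by the combinatorial isomorphism `f`. -/
def InducedBy (X : CohCfg Ω) (X' : CohCfg Ω') (φ : Set (Ω × Ω) → Set (Ω' × Ω'))
    (f : Ω → Ω') : Prop :=
  Function.Bijective f ∧ ∀ s ∈ X.S, φ s = relImage f s

/-- `X` is separable: every algebraic isomorphism from `X` is induced by an isomorphism. -/
def Separable (X : CohCfg Ω) : Prop :=
  ∀ (Ω'' : Type u) (X' : CohCfg Ω'') (φ : Set (Ω × Ω) → Set (Ω'' × Ω'')),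
    IsAlgIso X X' φ → ∃ f : Ω → Ω'', InducedBy X X' φ f

/-- `X` is sesquiseparable: every sesquiclosed algebraic isomorphism from `X`
is induced by an isomorphism. -/
def Sesquiseparable (X : CohCfg Ω) : Prop :=
  ∀ (Ω'' : Type u) (X' : CohCfg Ω'') (φ : Set (Ω × Ω) → Set (Ω'' × Ω'')),
    SesquiclosedIso X X' φ → ∃ f : Ω → Ω'', InducedBy X X' φ f

/-- A sesquiclosed coherent configuration: (S1) the fibers of every one-point
extension `X_α` are the nonempty sets `αs`, and (S2) the identity algebraic
automorphism is sesquiclosed. -/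
def SesquiclosedCfg (X : CohCfg Ω) : Prop :=
  (∀ α : Ω, ∀ Y : CohCfg Ω, IsPointExt X α Y →
     ∀ Δ : Set Ω, (IsFiber Y Δ ↔ ∃ s ∈ X.S, Δ = pointSet s α ∧ Δ.Nonempty)) ∧
  SesquiclosedIso X X id

/-- A parabolic of `X`: a relation that is an equivalence relation on `Ω`. -/
def IsParabolic (X : CohCfg Ω) (e : Set (Ω × Ω)) : Prop :=
  IsRelationOf X e ∧ (∀ a : Ω, (a, a) ∈ e) ∧ (∀ p ∈ e, (p.2, p.1) ∈ e) ∧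
    ∀ a b c : Ω, (a, b) ∈ e → (b, c) ∈ e → (a, c) ∈ e

/-- The class of `a` modulo the equivalence relation `e`. -/
def eClass (e : Set (Ω × Ω)) (a : Ω) : Set Ω := {b | (a, b) ∈ e}

/-- `Δ/e` is a section of `X`: `e` is a parabolic and `Δ` is a class of a
parabolic containing `e`. -/
def IsSection (X : CohCfg Ω) (Δ : Set Ω) (e : Set (Ω × Ω)) : Prop :=
  IsParabolic X e ∧ ∃ d : Set (Ω × Ω), IsParabolic X d ∧ e ⊆ d ∧ ∃ a : Ω, Δ = eClass d a

/-- The point set of the section `Δ/e`: the `e`-classes of points of `Δ`. -/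
abbrev Sec (Δ : Set Ω) (e : Set (Ω × Ω)) : Type u :=
  {Γ : Set Ω // ∃ a ∈ Δ, Γ = eClass e a}

/-- The relation `s_𝔖` on the section `𝔖 = Δ/e`. -/
def secRel (Δ : Set Ω) (e : Set (Ω × Ω)) (s : Set (Ω × Ω)) :
    Set (Sec Δ e × Sec Δ e) :=
  {p | ∃ a ∈ p.1.1, ∃ b ∈ p.2.1, (a, b) ∈ s}

/-- `Y` is the coherent configuration `X_𝔖` on the section `𝔖 = Δ/e`. -/
def IsSectionCfg (X : CohCfg Ω) (Δ : Set Ω) (e : Set (Ω × Ω))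
    (Y : CohCfg (Sec Δ e)) : Prop :=
  Y.S = {t | ∃ s ∈ X.S, t = secRel Δ e s ∧ t.Nonempty}

/-- The restriction `s_Δ` of a relation to a subset `Δ`. -/
def restRel (Δ : Set Ω) (s : Set (Ω × Ω)) : Set (↥Δ × ↥Δ) := {p | (p.1.1, p.2.1) ∈ s}

/-- `Y` is the restriction `X_Δ` of `X` to `Δ`. -/
def IsRestrictionCfg (X : CohCfg Ω) (Δ : Set Ω) (Y : CohCfg ↥Δ) : Prop :=
  Y.S = {t | ∃ s ∈ X.S, t = restRel Δ s ∧ t.Nonempty}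

/-- `Iso(X, X', φ)`: isomorphisms inducing the algebraic isomorphism `φ`. -/
def IsoSet (X : CohCfg Ω) (X' : CohCfg Ω') (φ : Set (Ω × Ω) → Set (Ω' × Ω')) :
    Set (Ω → Ω') :=
  {f | Function.Bijective f ∧ ∀ s ∈ X.S, relImage f s = φ s}

/-- `X` is schurian: its basis relations are the orbits of `Aut(X)` on `Ω × Ω`. -/
def Schurian (X : CohCfg Ω) : Prop :=
  ∀ s ∈ X.S, ∀ p ∈ s, ∀ q ∈ s, ∃ f : Ω → Ω,
    (Function.Bijective f ∧ ∀ t ∈ X.S, relImage f t = t) ∧ (f p.1, f p.2) = q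

/-- `e ⊆ rad(s)`: `s` is a union of products of pairs of `e`-classes it meets. -/
def RadGE (e s : Set (Ω × Ω)) : Prop :=
  ∀ p ∈ s, ∀ a b : Ω, (p.1, a) ∈ e → (p.2, b) ∈ e → (a, b) ∈ s

/-- The `e₁/e₀`-condition: every basis relation disjoint from `e₁` has `e₀` in
its radical. -/
def WedgeCond (X : CohCfg Ω) (e0 e1 : Set (Ω × Ω)) : Prop :=
  ∀ s ∈ X.S, s ∩ e1 = ∅ → RadGE e0 s

/-- A circulant coherent configuration on a group `G`: right translations are
automorphisms. -/
def IsCirculant {G : Type u} [Group G] (X : CohCfg G) : Prop :=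
  ∀ g : G, ∀ s ∈ X.S, relImage (fun x => x * g) s = s

/-- The equivalence relation `e(H)` whose classes are the cosets of `H`. -/
def eRelSet {G : Type u} [Group G] (H : Subgroup G) : Set (G × G) :=
  {p | p.1⁻¹ * p.2 ∈ H}

/-- `H` is an `X`-group. -/
def IsXGroup {G : Type u} [Group G] (X : CohCfg G) (H : Subgroup G) : Prop :=
  IsParabolic X (eRelSet H)

/-- A normal circulant scheme: every automorphism fixing the identity is a
group automorphism. -/
def IsNormalCirc {G : Type u} [Group G] (X : CohCfg G) : Prop :=
  ∀ f : G → G, Function.Bijective f → (∀ s ∈ X.S, relImage f s = s) → f 1 = 1 →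
    ∀ a b : G, f (a * b) = f a * f b

/-- Normality of a circulant scheme presented on a section `Δ/e` of a group `G`
(the points are cosets): every automorphism fixing the class of `1` respects the
coset multiplication. -/
def IsNormalSec {G : Type u} [Group G] (Δ : Set G) (e : Set (G × G))
    (Y : CohCfg (Sec Δ e)) : Prop :=
  ∀ F : Sec Δ e → Sec Δ e, Function.Bijective F → (∀ t ∈ Y.S, relImage F t = t) →
    (∀ Γ : Sec Δ e, (1 : G) ∈ Γ.1 → F Γ = Γ) →
    ∀ Γ Γ' Γ'' : Sec Δ e, Γ''.1 = Set.image2 (· * ·) Γ.1 Γ'.1 →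
      (F Γ'').1 = Set.image2 (· * ·) (F Γ).1 (F Γ').1

/-- Normality of a circulant scheme presented on (the subtype of) a subgroup `U ⊆ G`. -/
def IsNormalRest {G : Type u} [Group G] (U : Set G) (Y : CohCfg ↥U) : Prop :=
  ∀ F : ↥U → ↥U, Function.Bijective F → (∀ t ∈ Y.S, relImage F t = t) →
    (∀ x : ↥U, x.1 = 1 → F x = x) →
    ∀ x y z : ↥U, z.1 = x.1 * y.1 → (F z).1 = (F x).1 * (F y).1

/-- `N` is an `X_U`-group: `N ≤ U` and the restriction of `e(N)` to `U` is a
relation of the restriction `X_U`. -/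
def SubXGroup {G : Type u} [Group G] (X : CohCfg G) (U N : Subgroup G) : Prop :=
  N ≤ U ∧ ∀ s ∈ X.S, (∃ p ∈ s, p.1 ∈ U ∧ p.2 ∈ U ∧ p.1⁻¹ * p.2 ∈ N) →
    ∀ p ∈ s, p.1 ∈ U → p.2 ∈ U → p.1⁻¹ * p.2 ∈ N

end CohCfg

section Auxiliary

open CohCfg

variable {Ω Ω' : Type u}

lemma basis_eq {X : CohCfg Ω} {s t : Set (Ω × Ω)} (hs : s ∈ X.S) (ht : t ∈ X.S)
    {p : Ω × Ω} (hps : p ∈ s) (hpt : p ∈ t) : s = t := by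
  by_contra hne
  have := X.disj s hs t ht hne
  exact absurd (show p ∈ s ∩ t from ⟨hps, hpt⟩) (by rw [this]; exact notMem_empty p)

lemma class_pair {X : CohCfg Ω} {e : Set (Ω × Ω)} (he : IsParabolic X e) {β x y : Ω}
    (hx : x ∈ eClass e β) (hy : y ∈ eClass e β) : (x, y) ∈ e :=
  he.2.2.2 _ _ _ (he.2.2.1 (β, x) hx) hy

lemma eClass_eq {X : CohCfg Ω} {e : Set (Ω × Ω)} (he : IsParabolic X e) {a b : Ω}
    (h : b ∈ eClass e a) : eClass e a = eClass e b := by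
  ext c
  exact ⟨fun hc => he.2.2.2 _ _ _ (he.2.2.1 (a, b) h) hc, fun hc => he.2.2.2 _ _ _ h hc⟩

lemma mem_algImage {X : CohCfg Ω} {φ : Set (Ω × Ω) → Set (Ω' × Ω')} {e : Set (Ω × Ω)}
    {p : Ω' × Ω'} : p ∈ algImage X φ e ↔ ∃ s ∈ X.S, s ⊆ e ∧ p ∈ φ s := by
  constructor
  · rintro ⟨t', ⟨t, ⟨htS, hte⟩, rfl⟩, hp⟩
    exact ⟨t, htS, hte, hp⟩
  · rintro ⟨s, hsS, hse, hp⟩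
    exact ⟨φ s, ⟨s, ⟨hsS, hse⟩, rfl⟩, hp⟩

lemma cnum_pos {Ω : Type u} [Finite Ω] {r s : Set (Ω × Ω)} {p : Ω × Ω} :
    0 < cnum r s p ↔ ∃ γ, (p.1, γ) ∈ r ∧ (γ, p.2) ∈ s := by
  rw [cnum, Set.ncard_pos (Set.toFinite _)]
  exact ⟨fun ⟨γ, h⟩ => ⟨γ, h⟩, fun ⟨γ, h⟩ => ⟨γ, h⟩⟩

lemma radGE_transfer {X : CohCfg Ω} {X' : CohCfg Ω'} {φ : Set (Ω × Ω) → Set (Ω' × Ω')}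
    (hφ : IsAlgIso X X' φ) {e0 : Set (Ω × Ω)} (he0 : IsParabolic X e0)
    {e0' : Set (Ω' × Ω')} (he0' : e0' = algImage X φ e0)
    {s : Set (Ω × Ω)} (hs : s ∈ X.S) (hrad : RadGE e0 s) : RadGE e0' (φ s) := by
  have _f : Finite Ω := X.finite
  have _f' : Finite Ω' := X'.finite
  intro p' hp' a' b' ha' hb'
  obtain ⟨u, hu, hue, hau⟩ := mem_algImage.mp (he0' ▸ ha')
  obtain ⟨t', ht', hat⟩ := X'.cover (a', p'.2)
  obtain ⟨t, ht, rfl⟩ := hφ.bijOn.surjOn ht'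
  obtain ⟨p, hp⟩ := X.nonemp s hs
  have hq := hφ.cnum_eq u hu t ht s hs p hp p' hp'
  have hpos : 0 < cnum (φ u) (φ t) p' := cnum_pos.mpr ⟨a', hau, hat⟩
  rw [← hq] at hpos
  obtain ⟨γ, hγu, hγt⟩ := cnum_pos.mp hpos
  have hγs : (γ, p.2) ∈ s := hrad p hp γ p.2 (hue hγu) (he0.2.1 p.2)
  have hts : t = s := basis_eq ht hs hγt hγs
  subst hts
  obtain ⟨v, hv, hve, hbv⟩ := mem_algImage.mp (he0' ▸ hb')
  obtain ⟨w', hw', habw⟩ := X'.cover (a', b')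
  obtain ⟨w, hw, rfl⟩ := hφ.bijOn.surjOn hw'
  obtain ⟨pw, hpw⟩ := X.nonemp w hw
  have hq2 := hφ.cnum_eq t hs v hv w hw pw hpw (a', b') habw
  have hpos2 : 0 < cnum (φ t) (φ v) (a', b') := cnum_pos.mpr ⟨p'.2, hat, hbv⟩
  rw [← hq2] at hpos2
  obtain ⟨γ₂, hγ2s, hγ2v⟩ := cnum_pos.mp hpos2
  have hws : (pw.1, pw.2) ∈ t := hrad (pw.1, γ₂) hγ2s pw.1 pw.2 (he0.2.1 pw.1) (hve hγ2v)
  have : w = t := basis_eq hw hs hpw hws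
  exact this ▸ habw

def restrictCfg (X : CohCfg Ω) {e : Set (Ω × Ω)} (he : IsParabolic X e) (β : Ω) :
    CohCfg ↥(eClass e β) where
  S := {t | ∃ s ∈ X.S, t = restRel (eClass e β) s ∧ t.Nonempty}
  finite := by have := X.finite; exact inferInstance
  cover := by
    intro p
    obtain ⟨s, hs, hp⟩ := X.cover (p.1.1, p.2.1)
    exact ⟨restRel _ s, ⟨s, hs, rfl, ⟨p, hp⟩⟩, hp⟩
  disj := by
    rintro t ⟨s, hs, rfl, -⟩ t' ⟨s', hs', rfl, -⟩ hne
    rw [Set.eq_empty_iff_forall_notMem]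
    rintro p ⟨hp, hp'⟩
    exact hne (by rw [basis_eq hs hs' hp hp'])
  nonemp := by rintro t ⟨s, hs, rfl, hne⟩; exact hne
  diag := by
    rintro t ⟨s, hs, rfl, -⟩ ⟨p, hp, hd⟩ q hq
    have hds := X.diag s hs ⟨(p.1.1, p.2.1), hp, congrArg Subtype.val hd⟩
    exact Subtype.ext (hds (q.1.1, q.2.1) hq)
  conv := by
    rintro t ⟨s, hs, rfl, hne⟩
    refine ⟨{p | (p.2, p.1) ∈ s}, X.conv s hs, rfl, ?_⟩
    obtain ⟨p, hp⟩ := hne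
    exact ⟨(p.2, p.1), hp⟩
  inum := by
    rintro r ⟨r0, hr0, rfl, hrne⟩ s ⟨s0, hs0, rfl, -⟩ t ⟨t0, ht0, rfl, -⟩ p hp q hq
    have hr0e : r0 ⊆ e := by
      obtain ⟨⟨a, b⟩, hab⟩ := hrne
      exact he.1 r0 hr0 ⟨(a.1, b.1), hab, class_pair he a.2 b.2⟩
    have key : ∀ x : ↥(eClass e β) × ↥(eClass e β),
        {γ : ↥(eClass e β) | (x.1, γ) ∈ restRel (eClass e β) r0 ∧
          (γ, x.2) ∈ restRel (eClass e β) s0}.ncard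
        = {γ : Ω | (x.1.1, γ) ∈ r0 ∧ (γ, x.2.1) ∈ s0}.ncard := by
      intro x
      rw [← Set.ncard_image_of_injective _ Subtype.val_injective]
      congr 1
      ext γ
      constructor
      · rintro ⟨γ', ⟨h1, h2⟩, rfl⟩; exact ⟨h1, h2⟩
      · rintro ⟨h1, h2⟩
        have hγ : γ ∈ eClass e β := he.2.2.2 _ _ _ x.1.2 (hr0e h1)
        exact ⟨⟨γ, hγ⟩, ⟨h1, h2⟩, rfl⟩
    rw [key, key]
    exact X.inum r0 hr0 s0 hs0 t0 ht0 (p.1.1, p.2.1) hp (q.1.1, q.2.1) hq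

lemma restrictCfg_is (X : CohCfg Ω) {e : Set (Ω × Ω)} (he : IsParabolic X e) (β : Ω) :
    IsRestrictionCfg X (eClass e β) (restrictCfg X he β) := rfl

open scoped Classical in
noncomputable def mkPhi (X : CohCfg Ω) (φ : Set (Ω × Ω) → Set (Ω' × Ω')) (Δ : Set Ω)
    (Δ' : Set Ω') (t : Set (↥Δ × ↥Δ)) : Set (↥Δ' × ↥Δ') :=
  if h : ∃ s, s ∈ X.S ∧ t = restRel Δ s ∧ t.Nonempty then restRel Δ' (φ h.choose) else ∅

lemma mkPhi_eq {X : CohCfg Ω} {φ : Set (Ω × Ω) → Set (Ω' × Ω')} {Δ : Set Ω} {Δ' : Set Ω'}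
    {s : Set (Ω × Ω)} (hs : s ∈ X.S) (hne : (restRel Δ s).Nonempty) :
    mkPhi X φ Δ Δ' (restRel Δ s) = restRel Δ' (φ s) := by
  have h : ∃ s', s' ∈ X.S ∧ restRel Δ s = restRel Δ s' ∧ (restRel Δ s).Nonempty :=
    ⟨s, hs, rfl, hne⟩
  rw [mkPhi, dif_pos h]
  obtain ⟨p, hp⟩ := hne
  have hp' : p ∈ restRel Δ h.choose := h.choose_spec.2.1 ▸ hp
  rw [basis_eq h.choose_spec.1 hs hp' hp]

lemma some_congr {Ω : Type u} {s t : Set Ω} (h : s = t) (hs : s.Nonempty) (ht : t.Nonempty) :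
    hs.some = ht.some := by subst h; rfl

open scoped Classical in
noncomputable def repFn (e : Set (Ω × Ω)) (hrefl : ∀ x : Ω, (x, x) ∈ e) (α a : Ω) : Ω :=
  if (α, a) ∈ e then α else Set.Nonempty.some (s := eClass e a) ⟨a, hrefl a⟩

lemma repFn_mem {X : CohCfg Ω} {e : Set (Ω × Ω)} (he : IsParabolic X e) (α a : Ω) :
    a ∈ eClass e (repFn e he.2.1 α a) := by
  rw [repFn]
  split
  · next h => exact h
  · next h =>
      have hmem := Set.Nonempty.some_mem (s := eClass e a) ⟨a, he.2.1 a⟩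
      exact he.2.2.1 _ hmem

lemma repFn_congr {X : CohCfg Ω} {e : Set (Ω × Ω)} (he : IsParabolic X e) (α : Ω) {a b : Ω}
    (hab : (a, b) ∈ e) : repFn e he.2.1 α a = repFn e he.2.1 α b := by
  have hcls : eClass e a = eClass e b := eClass_eq he hab
  rw [repFn, repFn]
  by_cases h : (α, a) ∈ e
  · rw [if_pos h, if_pos (he.2.2.2 _ _ _ h hab)]
  · rw [if_neg h, if_neg (fun hb => h (he.2.2.2 _ _ _ hb (he.2.2.1 (a, b) hab)))]
    exact some_congr hcls _ _

def KeyProp (X : CohCfg Ω) (φ : Set (Ω × Ω) → Set (Ω' × Ω'))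
    (e0 : Set (Ω × Ω)) (e0' : Set (Ω' × Ω')) (e1 : Set (Ω × Ω)) (e1' : Set (Ω' × Ω'))
    (g : Sec (univ : Set Ω) e0 → Sec (univ : Set Ω') e0') (β : Ω) (β' : Ω')
    (h : ↥(eClass e1 β) → ↥(eClass e1' β')) : Prop :=
  Function.Bijective h ∧
  (∀ s ∈ X.S, ∀ a b : ↥(eClass e1 β), ((a.1, b.1) ∈ s ↔ ((h a).1, (h b).1) ∈ φ s)) ∧
  (∀ (a : ↥(eClass e1 β)) (G : Sec (univ : Set Ω) e0), a.1 ∈ G.1 → (h a).1 ∈ (g G).1)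

def mkSec (e : Set (Ω × Ω)) (a : Ω) : Sec (univ : Set Ω) e :=
  ⟨eClass e a, a, mem_univ a, rfl⟩

end Auxiliary


open CohCfg in
/-- Lemma: let `X` be a scheme satisfying the `e₁/e₀`-condition and
`φ : X → X'` an algebraic isomorphism.  Assume that for all `α, α'` one has
`Iso_{α₀,α'₀}(X₀,X'₀,φ₀)^{Δ₀} = Iso_{α,α'}(X₁,X'₁,φ₁)^{Δ₀}` (hypothesis `H`;
here `Δ₀ = Δ/e₀`, `Δ` the class of `e₁` containing `α`).  Then for all `α, α'`:
(i) the bijections `Ω/e₀ → Ω'/e'₀` induced by `Iso_{α,α'}(X,X',φ)` are exactly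
`Iso_{α₀,α'₀}(X₀,X'₀,φ₀)`; (ii) the restrictions to `Δ` of elements of
`Iso_{α,α'}(X,X',φ)` are exactly `Iso_{α,α'}(X₁,X'₁,φ₁)`. -/
theorem stmt_11 {Ω Ω' : Type u} (X : CohCfg Ω) (X' : CohCfg Ω')
    (hX : IsScheme X) (hX' : IsScheme X')
    (e0 e1 : Set (Ω × Ω)) (he0 : IsParabolic X e0) (he1 : IsParabolic X e1)
    (h01 : e0 ⊆ e1) (hw : WedgeCond X e0 e1)
    (φ : Set (Ω × Ω) → Set (Ω' × Ω')) (hφ : IsAlgIso X X' φ)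
    (e0' e1' : Set (Ω' × Ω')) (he0' : e0' = algImage X φ e0)
    (he1' : e1' = algImage X φ e1)
    (he0'p : IsParabolic X' e0') (he1'p : IsParabolic X' e1')
    -- the quotient configurations X₀, X'₀ and the induced φ₀
    (Y0 : CohCfg (Sec (univ : Set Ω) e0)) (hY0 : IsSectionCfg X univ e0 Y0)
    (Y0' : CohCfg (Sec (univ : Set Ω') e0')) (hY0' : IsSectionCfg X' univ e0' Y0')
    (φ0 : Set (Sec (univ : Set Ω) e0 × Sec (univ : Set Ω) e0) →
          Set (Sec (univ : Set Ω') e0' × Sec (univ : Set Ω') e0'))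
    (hφ0 : ∀ s ∈ X.S, φ0 (secRel univ e0 s) = secRel univ e0' (φ s))
    -- hypothesis (080222q)
    (H : ∀ (α : Ω) (α' : Ω'),
      ∀ X1 : CohCfg ↥(eClass e1 α), IsRestrictionCfg X (eClass e1 α) X1 →
      ∀ X1' : CohCfg ↥(eClass e1' α'), IsRestrictionCfg X' (eClass e1' α') X1' →
      ∀ φ1 : Set (↥(eClass e1 α) × ↥(eClass e1 α)) →
             Set (↥(eClass e1' α') × ↥(eClass e1' α')),
        (∀ s ∈ X.S, (restRel (eClass e1 α) s).Nonempty →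
           φ1 (restRel (eClass e1 α) s) = restRel (eClass e1' α') (φ s)) →
        {k : Sec (eClass e1 α) e0 → Sec (eClass e1' α') e0' |
          ∃ g ∈ IsoSet Y0 Y0' φ0,
            g ⟨eClass e0 α, α, mem_univ α, rfl⟩ =
              ⟨eClass e0' α', α', mem_univ α', rfl⟩ ∧
            (∀ G : Sec (univ : Set Ω) e0, (G.1 ∩ eClass e1 α).Nonempty →
              ((g G).1 ∩ eClass e1' α').Nonempty) ∧
            ∀ (Γ : Sec (eClass e1 α) e0) (G : Sec (univ : Set Ω) e0),
              Γ.1 = G.1 → (k Γ).1 = (g G).1} =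
        {k : Sec (eClass e1 α) e0 → Sec (eClass e1' α') e0' |
          ∃ h ∈ IsoSet X1 X1' φ1,
            h ⟨α, he1.2.1 α⟩ = ⟨α', he1'p.2.1 α'⟩ ∧
            relImage h (restRel (eClass e1 α) e0) = restRel (eClass e1' α') e0' ∧
            ∀ (Γ : Sec (eClass e1 α) e0) (a : ↥(eClass e1 α)),
              a.1 ∈ Γ.1 → (h a).1 ∈ (k Γ).1}) :
    ∀ (α : Ω) (α' : Ω'),
      -- (i)
      ({g : Sec (univ : Set Ω) e0 → Sec (univ : Set Ω') e0' |
          ∃ f ∈ IsoSet X X' φ, f α = α' ∧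
            ∀ G : Sec (univ : Set Ω) e0, ∀ a ∈ G.1, f a ∈ (g G).1} =
        {g | g ∈ IsoSet Y0 Y0' φ0 ∧
          g ⟨eClass e0 α, α, mem_univ α, rfl⟩ =
            ⟨eClass e0' α', α', mem_univ α', rfl⟩}) ∧
      -- (ii)
      (∀ X1 : CohCfg ↥(eClass e1 α), IsRestrictionCfg X (eClass e1 α) X1 →
       ∀ X1' : CohCfg ↥(eClass e1' α'), IsRestrictionCfg X' (eClass e1' α') X1' →
       ∀ φ1 : Set (↥(eClass e1 α) × ↥(eClass e1 α)) →
              Set (↥(eClass e1' α') × ↥(eClass e1' α')),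
         (∀ s ∈ X.S, (restRel (eClass e1 α) s).Nonempty →
            φ1 (restRel (eClass e1 α) s) = restRel (eClass e1' α') (φ s)) →
         {h : ↥(eClass e1 α) → ↥(eClass e1' α') |
            ∃ f ∈ IsoSet X X' φ, f α = α' ∧
              ∀ d : ↥(eClass e1 α), (h d).1 = f d.1} =
         {h | h ∈ IsoSet X1 X1' φ1 ∧ h ⟨α, he1.2.1 α⟩ = ⟨α', he1'p.2.1 α'⟩}) := by
  classical
  have finΩ : Finite Ω := X.finite
  have finΩ' : Finite Ω' := X'.finite
  -- ambient facts
  have e0'sub : e0' ⊆ e1' := by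
    rw [he0', he1']
    intro p hp
    obtain ⟨s, hs, hse, hps⟩ := mem_algImage.mp hp
    exact mem_algImage.mpr ⟨s, hs, fun q hq => h01 (hse hq), hps⟩
  have rad' : ∀ s ∈ X.S, s ∩ e1 = ∅ → RadGE e0' (φ s) :=
    fun s hs hdisj => radGE_transfer hφ he0 he0' hs (hw s hs hdisj)
  have scase : ∀ s ∈ X.S, s ⊆ e1 ∨ s ∩ e1 = ∅ := by
    intro s hs
    by_cases hd : (s ∩ e1).Nonempty
    · exact Or.inl (he1.1 s hs hd)
    · exact Or.inr (not_nonempty_iff_eq_empty.mp hd)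
  have secmem : ∀ s ∈ X.S, secRel univ e0 s ∈ Y0.S := by
    intro s hs
    rw [hY0]
    obtain ⟨⟨a, b⟩, hab⟩ := X.nonemp s hs
    exact ⟨s, hs, rfl, ⟨(mkSec e0 a, mkSec e0 b), a, he0.2.1 a, b, he0.2.1 b, hab⟩⟩
  have gclass : ∀ (g : Sec (univ : Set Ω) e0 → Sec (univ : Set Ω') e0')
      (G : Sec (univ : Set Ω) e0), ∃ c', (g G).1 = eClass e0' c' := by
    intro g G
    obtain ⟨c', -, hcc⟩ := (g G).2
    exact ⟨c', hcc⟩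
  have secclass : ∀ G : Sec (univ : Set Ω) e0, ∃ c, G.1 = eClass e0 c := by
    intro G
    obtain ⟨c, -, hcc⟩ := G.2
    exact ⟨c, hcc⟩
  have secclass' : ∀ G : Sec (univ : Set Ω') e0', ∃ c, G.1 = eClass e0' c := by
    intro G
    obtain ⟨c, -, hcc⟩ := G.2
    exact ⟨c, hcc⟩
  have grel : ∀ g, g ∈ IsoSet Y0 Y0' φ0 → ∀ s ∈ X.S, ∀ G Hs : Sec (univ : Set Ω) e0,
      ((G, Hs) ∈ secRel univ e0 s ↔ (g G, g Hs) ∈ secRel univ e0' (φ s)) := by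
    intro g hg s hs G Hs
    have hgbij : Function.Bijective g := hg.1
    have himg : relImage g (secRel univ e0 s) = secRel univ e0' (φ s) := by
      rw [hg.2 _ (secmem s hs), hφ0 s hs]
    constructor
    · intro hGH
      have hmem : (g G, g Hs) ∈ relImage g (secRel univ e0 s) := ⟨(G, Hs), hGH, rfl⟩
      rwa [himg] at hmem
    · intro hGH
      rw [← himg] at hGH
      obtain ⟨⟨P, Q⟩, hPQ, heq⟩ := hGH
      have h1 : P = G := hgbij.injective (congrArg Prod.fst heq)
      have h2 : Q = Hs := hgbij.injective (congrArg Prod.snd heq)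
      rw [← h1, ← h2]
      exact hPQ
  have gmeets : ∀ g, g ∈ IsoSet Y0 Y0' φ0 → ∀ β β', β' ∈ (g (mkSec e0 β)).1 →
      ∀ G : Sec (univ : Set Ω) e0, (G.1 ∩ eClass e1 β).Nonempty →
        ((g G).1 ∩ eClass e1' β').Nonempty := by
    intro g hg β β' hβ' G hGmeet
    obtain ⟨a, haG, haΔ⟩ := hGmeet
    have hab : (a, β) ∈ e1 := he1.2.2.1 (β, a) haΔ
    obtain ⟨u, hu, hau⟩ := X.cover (a, β)
    have hue : u ⊆ e1 := he1.1 u hu ⟨(a, β), hau, hab⟩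
    have hsec : (G, mkSec e0 β) ∈ secRel univ e0 u := ⟨a, haG, β, he0.2.1 β, hau⟩
    obtain ⟨x', hx', y', hy', hxy⟩ := (grel g hg u hu G (mkSec e0 β)).mp hsec
    have hxy1 : (x', y') ∈ e1' := by
      rw [he1']; exact mem_algImage.mpr ⟨u, hu, hue, hxy⟩
    obtain ⟨d, hd⟩ := gclass g (mkSec e0 β)
    have hyβ : (y', β') ∈ e0' := class_pair he0'p (hd ▸ hy') (hd ▸ hβ')
    have hxβ : (x', β') ∈ e1' := he1'p.2.2.2 _ _ _ hxy1 (e0'sub hyβ)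
    exact ⟨x', hx', he1'p.2.2.1 _ hxβ⟩
  have keyprop_of_iso : ∀ (g : Sec (univ : Set Ω) e0 → Sec (univ : Set Ω') e0')
      (β : Ω) (β' : Ω') (X1 : CohCfg ↥(eClass e1 β))
      (hX1 : IsRestrictionCfg X (eClass e1 β) X1) (X1' : CohCfg ↥(eClass e1' β'))
      (hX1' : IsRestrictionCfg X' (eClass e1' β') X1')
      (φ1 : Set (↥(eClass e1 β) × ↥(eClass e1 β)) →
            Set (↥(eClass e1' β') × ↥(eClass e1' β')))
      (hφ1 : ∀ s ∈ X.S, (restRel (eClass e1 β) s).Nonempty →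
        φ1 (restRel (eClass e1 β) s) = restRel (eClass e1' β') (φ s))
      (h : ↥(eClass e1 β) → ↥(eClass e1' β')), h ∈ IsoSet X1 X1' φ1 →
      (∀ (a : ↥(eClass e1 β)) (G : Sec (univ : Set Ω) e0), a.1 ∈ G.1 → (h a).1 ∈ (g G).1) →
      KeyProp X φ e0 e0' e1 e1' g β β' h := by
    intro g β β' X1 hX1 X1' hX1' φ1 hφ1 h hiso hthird
    have hbij : Function.Bijective h := hiso.1
    have hrel : ∀ t ∈ X1.S, relImage h t = φ1 t := hiso.2
    refine ⟨hbij, ?_, hthird⟩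
    intro s hs a b
    constructor
    · intro hab
      have htmem : restRel (eClass e1 β) s ∈ X1.S := by
        rw [hX1]; exact ⟨s, hs, rfl, ⟨(a, b), hab⟩⟩
      have hmem : (h a, h b) ∈ relImage h (restRel (eClass e1 β) s) := ⟨(a, b), hab, rfl⟩
      rw [hrel _ htmem, hφ1 s hs ⟨(a, b), hab⟩] at hmem
      exact hmem
    · intro hab'
      obtain ⟨t2, ht2, hab2⟩ := X1.cover (a, b)
      have ht2' := ht2
      rw [hX1] at ht2'
      obtain ⟨s2, hs2, ht2eq, hne2⟩ := ht2'
      subst ht2eq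
      have hmem : (h a, h b) ∈ relImage h (restRel (eClass e1 β) s2) := ⟨(a, b), hab2, rfl⟩
      rw [hrel _ ht2, hφ1 s2 hs2 hne2] at hmem
      have hfeq : φ s2 = φ s :=
        basis_eq (hφ.bijOn.mapsTo hs2) (hφ.bijOn.mapsTo hs) hmem hab'
      have hseq : s2 = s := hφ.bijOn.injOn hs2 hs hfeq
      rw [← hseq]
      exact hab2
  have exists_keyprop : ∀ g, g ∈ IsoSet Y0 Y0' φ0 → ∀ (β : Ω) (β' : Ω'),
      β' ∈ (g (mkSec e0 β)).1 →
      ∃ h : ↥(eClass e1 β) → ↥(eClass e1' β'),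
        KeyProp X φ e0 e0' e1 e1' g β β' h ∧
        h ⟨β, he1.2.1 β⟩ = ⟨β', he1'p.2.1 β'⟩ := by
    intro g hg β β' hβ'
    have embx : ∀ Γ : Sec (eClass e1 β) e0, ∃ G : Sec (univ : Set Ω) e0,
        Γ.1 = G.1 ∧ (G.1 ∩ eClass e1 β).Nonempty := by
      intro Γ
      obtain ⟨c, hcΔ, hceq⟩ := Γ.2
      refine ⟨⟨Γ.1, c, mem_univ c, hceq⟩, rfl, ⟨c, ?_, hcΔ⟩⟩
      show c ∈ Γ.1
      rw [hceq]; exact he0.2.1 c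
    choose emb hembeq hembmeet using embx
    have kdef : ∀ Γ : Sec (eClass e1 β) e0, ∃ K : Sec (eClass e1' β') e0',
        K.1 = (g (emb Γ)).1 := by
      intro Γ
      obtain ⟨x', hx'g, hx'Δ⟩ := gmeets g hg β β' hβ' (emb Γ) (hembmeet Γ)
      obtain ⟨d, hd⟩ := gclass g (emb Γ)
      refine ⟨⟨(g (emb Γ)).1, x', hx'Δ, ?_⟩, rfl⟩
      rw [hd]
      exact eClass_eq he0'p (hd ▸ hx'g)
    choose k hk using kdef
    have pf1 : g (mkSec e0 β) = mkSec e0' β' := by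
      apply Subtype.ext
      obtain ⟨d, hd⟩ := gclass g (mkSec e0 β)
      show (g (mkSec e0 β)).1 = eClass e0' β'
      rw [hd]
      exact eClass_eq he0'p (hd ▸ hβ')
    have hH := H β β' (restrictCfg X he1 β) (restrictCfg_is X he1 β)
      (restrictCfg X' he1'p β') (restrictCfg_is X' he1'p β')
      (mkPhi X φ (eClass e1 β) (eClass e1' β'))
      (fun s hs hne => mkPhi_eq hs hne)
    obtain ⟨h, hhiso, hhpt, hhrest, hhΓ⟩ := (Set.ext_iff.mp hH k).mp (by
      simp only [Set.mem_setOf_eq]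
      refine ⟨g, hg, pf1, gmeets g hg β β' hβ', ?_⟩
      intro Γ G hΓG
      have hembG : emb Γ = G := Subtype.ext ((hembeq Γ).symm.trans hΓG)
      rw [hk Γ, hembG])
    refine ⟨h, keyprop_of_iso g β β' _ (restrictCfg_is X he1 β) _
      (restrictCfg_is X' he1'p β') _ (fun s hs hne => mkPhi_eq hs hne) h hhiso ?_, hhpt⟩
    intro a G haG
    obtain ⟨c, hc⟩ := secclass G
    have hG1 : G.1 = eClass e0 a.1 := by
      rw [hc]
      exact eClass_eq he0 (by rw [← hc]; exact haG)
    have hΓex : ∃ Γ : Sec (eClass e1 β) e0, Γ.1 = G.1 := ⟨⟨G.1, a.1, a.2, hG1⟩, rfl⟩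
    obtain ⟨Γ, hΓeq⟩ := hΓex
    have hembG : emb Γ = G := Subtype.ext ((hembeq Γ).symm.trans hΓeq)
    have h1 := hhΓ Γ a (by rw [hΓeq]; exact haG)
    rw [hk Γ, hembG] at h1
    exact h1
  have glue : ∀ g, g ∈ IsoSet Y0 Y0' φ0 → ∀ f : Ω → Ω',
      (∀ a : Ω, ∃ (β : Ω) (β' : Ω') (h : ↥(eClass e1 β) → ↥(eClass e1' β'))
        (ha : a ∈ eClass e1 β), KeyProp X φ e0 e0' e1 e1' g β β' h ∧
        ∀ b (hb : b ∈ eClass e1 β), f b = (h ⟨b, hb⟩).1) →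
      f ∈ IsoSet X X' φ ∧
        ∀ (G : Sec (univ : Set Ω) e0) (a : Ω), a ∈ G.1 → f a ∈ (g G).1 := by
    intro g hg f hf
    have compat : ∀ (G : Sec (univ : Set Ω) e0) (a : Ω), a ∈ G.1 → f a ∈ (g G).1 := by
      intro G a haG
      obtain ⟨β, β', h, ha, hkey, hagree⟩ := hf a
      rw [hagree a ha]
      exact hkey.2.2 ⟨a, ha⟩ G haG
    have hgbij : Function.Bijective g := hg.1
    have finj : Function.Injective f := by
      intro a b hab
      have ha' := compat (mkSec e0 a) a (he0.2.1 a)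
      have hb' := compat (mkSec e0 b) b (he0.2.1 b)
      obtain ⟨c, hc⟩ := gclass g (mkSec e0 a)
      obtain ⟨d, hd⟩ := gclass g (mkSec e0 b)
      have hgab : g (mkSec e0 a) = g (mkSec e0 b) := by
        apply Subtype.ext
        rw [hc, hd]
        rw [hab] at ha'
        rw [hc] at ha'
        rw [hd] at hb'
        rw [eClass_eq he0'p ha', eClass_eq he0'p hb']
      have hab0 : (a, b) ∈ e0 := by
        have hss : mkSec e0 a = mkSec e0 b := hgbij.injective hgab
        have hset : eClass e0 a = eClass e0 b := congrArg Subtype.val hss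
        show b ∈ eClass e0 a
        rw [hset]; exact he0.2.1 b
      obtain ⟨β, β', h, ha, hkey, hagree⟩ := hf a
      have hb1 : b ∈ eClass e1 β := he1.2.2.2 _ _ _ ha (h01 hab0)
      have heq : h ⟨a, ha⟩ = h ⟨b, hb1⟩ :=
        Subtype.ext (by rw [← hagree a ha, ← hagree b hb1]; exact hab)
      exact congrArg Subtype.val (hkey.1.injective heq)
    have fsurj : Function.Surjective f := by
      intro y
      obtain ⟨G, hG⟩ := hgbij.surjective ⟨eClass e0' y, y, mem_univ y, rfl⟩
      obtain ⟨c, hc⟩ := secclass G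
      obtain ⟨β, β', h, hcβ, hkey, hagree⟩ := hf c
      have hfc : f c ∈ (g G).1 := compat G c (by rw [hc]; exact he0.2.1 c)
      have hyG : y ∈ (g G).1 := by rw [hG]; exact he0'p.2.1 y
      obtain ⟨d', hd'⟩ := gclass g G
      have hfcy : (f c, y) ∈ e0' := class_pair he0'p (hd' ▸ hfc) (hd' ▸ hyG)
      have hfcΔ : f c ∈ eClass e1' β' := by rw [hagree c hcβ]; exact (h ⟨c, hcβ⟩).2
      have hyΔ : y ∈ eClass e1' β' := he1'p.2.2.2 _ _ _ hfcΔ (e0'sub hfcy)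
      obtain ⟨x, hx⟩ := hkey.1.surjective ⟨y, hyΔ⟩
      refine ⟨x.1, ?_⟩
      rw [hagree x.1 x.2]
      rw [show (⟨x.1, x.2⟩ : ↥(eClass e1 β)) = x from rfl, hx]
    have frel : ∀ s ∈ X.S, relImage f s = φ s := by
      intro s hs
      rcases scase s hs with hsub | hdisj
      · have hφsub : φ s ⊆ e1' := by
          intro p hp; rw [he1']; exact mem_algImage.mpr ⟨s, hs, hsub, hp⟩
        apply Set.Subset.antisymm
        · rintro p ⟨⟨a, b⟩, hab, rfl⟩
          show (f a, f b) ∈ φ s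
          obtain ⟨β, β', h, ha, hkey, hagree⟩ := hf a
          have hb1 : b ∈ eClass e1 β := he1.2.2.2 _ _ _ ha (hsub hab)
          rw [hagree a ha, hagree b hb1]
          exact (hkey.2.1 s hs ⟨a, ha⟩ ⟨b, hb1⟩).mp hab
        · rintro ⟨a', b'⟩ hab'
          obtain ⟨a, rfl⟩ := fsurj a'
          obtain ⟨b, rfl⟩ := fsurj b'
          have he1ab : (a, b) ∈ e1 := by
            have h1' : (f a, f b) ∈ e1' := hφsub hab'
            rw [he1'] at h1'
            obtain ⟨u, hu, hue, huab⟩ := mem_algImage.mp h1'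
            have hsec' : (g (mkSec e0 a), g (mkSec e0 b)) ∈ secRel univ e0' (φ u) :=
              ⟨f a, compat _ a (he0.2.1 a), f b, compat _ b (he0.2.1 b), huab⟩
            obtain ⟨x, hxa, y, hyb, hxyu⟩ := (grel g hg u hu _ _).mpr hsec'
            exact he1.2.2.2 _ _ _ (he1.2.2.2 _ _ _ (h01 hxa) (hue hxyu))
              (he1.2.2.1 _ (h01 hyb))
          obtain ⟨β, β', h, ha, hkey, hagree⟩ := hf a
          have hb1 : b ∈ eClass e1 β := he1.2.2.2 _ _ _ ha he1ab
          refine ⟨(a, b), ?_, rfl⟩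
          apply (hkey.2.1 s hs ⟨a, ha⟩ ⟨b, hb1⟩).mpr
          rw [← hagree a ha, ← hagree b hb1]
          exact hab'
      · have hrad := hw s hs hdisj
        have hrad' := rad' s hs hdisj
        apply Set.Subset.antisymm
        · rintro p ⟨⟨a, b⟩, hab, rfl⟩
          show (f a, f b) ∈ φ s
          have hsec' : (mkSec e0 a, mkSec e0 b) ∈ secRel univ e0 s :=
            ⟨a, he0.2.1 a, b, he0.2.1 b, hab⟩
          obtain ⟨x', hx', y', hy', hxy'⟩ := (grel g hg s hs _ _).mp hsec'
          obtain ⟨c, hc⟩ := gclass g (mkSec e0 a)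
          obtain ⟨d, hd⟩ := gclass g (mkSec e0 b)
          have h1 : (x', f a) ∈ e0' :=
            class_pair he0'p (hc ▸ hx') (hc ▸ compat _ a (he0.2.1 a))
          have h2 : (y', f b) ∈ e0' :=
            class_pair he0'p (hd ▸ hy') (hd ▸ compat _ b (he0.2.1 b))
          exact hrad' (x', y') hxy' (f a) (f b) h1 h2
        · rintro ⟨a', b'⟩ hab'
          obtain ⟨a, rfl⟩ := fsurj a'
          obtain ⟨b, rfl⟩ := fsurj b'
          have hsec' : (g (mkSec e0 a), g (mkSec e0 b)) ∈ secRel univ e0' (φ s) :=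
            ⟨f a, compat _ a (he0.2.1 a), f b, compat _ b (he0.2.1 b), hab'⟩
          obtain ⟨x, hxa, y, hyb, hxys⟩ := (grel g hg s hs _ _).mpr hsec'
          refine ⟨(a, b), ?_, rfl⟩
          exact hrad (x, y) hxys a b (he0.2.2.1 _ hxa) (he0.2.2.1 _ hyb)
    exact ⟨⟨⟨finj, fsurj⟩, frel⟩, compat⟩
  intro α α'
  constructor
  · -- part (i)
    ext g
    simp only [Set.mem_setOf_eq]
    constructor
    · rintro ⟨f, hfiso, hfα, hcompat⟩
      have hfbij : Function.Bijective f := hfiso.1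
      have hfrel : ∀ s ∈ X.S, relImage f s = φ s := hfiso.2
      have ginj : Function.Injective g := by
        intro G Hs hGH
        obtain ⟨c, hc⟩ := secclass G
        obtain ⟨d, hd⟩ := secclass Hs
        have hcG : c ∈ G.1 := by rw [hc]; exact he0.2.1 c
        have hdH : d ∈ Hs.1 := by rw [hd]; exact he0.2.1 d
        have h1 := hcompat G c hcG
        have h2 := hcompat Hs d hdH
        rw [hGH] at h1
        obtain ⟨e', he'⟩ := gclass g Hs
        have hcd' : (f c, f d) ∈ e0' := class_pair he0'p (he' ▸ h1) (he' ▸ h2)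
        rw [he0'] at hcd'
        obtain ⟨u, hu, hue, hcd⟩ := mem_algImage.mp hcd'
        rw [← hfrel u hu] at hcd
        obtain ⟨⟨x, y⟩, hxy, heq⟩ := hcd
        have hx : x = c := hfbij.injective (congrArg Prod.fst heq)
        have hy : y = d := hfbij.injective (congrArg Prod.snd heq)
        subst hx; subst hy
        apply Subtype.ext
        rw [hc, hd, eClass_eq he0 (hue hxy)]
      have gsurj : Function.Surjective g := by
        intro G'
        obtain ⟨c', hc'⟩ := secclass' G'
        obtain ⟨c, rfl⟩ := hfbij.surjective c'
        refine ⟨mkSec e0 c, ?_⟩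
        apply Subtype.ext
        obtain ⟨d', hd'⟩ := gclass g (mkSec e0 c)
        have h1 := hcompat (mkSec e0 c) c (he0.2.1 c)
        show (g (mkSec e0 c)).1 = G'.1
        rw [hd', hc']
        exact eClass_eq he0'p (hd' ▸ h1)
      have grel' : ∀ t ∈ Y0.S, relImage g t = φ0 t := by
        intro t ht
        rw [hY0] at ht
        obtain ⟨s, hs, rfl, -⟩ := ht
        rw [hφ0 s hs]
        apply Set.Subset.antisymm
        · rintro p' ⟨⟨G, Hs⟩, ⟨x, hxG, y, hyH, hxys⟩, rfl⟩
          refine ⟨f x, hcompat G x hxG, f y, hcompat Hs y hyH, ?_⟩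
          rw [← hfrel s hs]
          exact ⟨(x, y), hxys, rfl⟩
        · rintro ⟨G', H'⟩ ⟨x', hx', y', hy', hxy'⟩
          rw [← hfrel s hs] at hxy'
          obtain ⟨⟨x, y⟩, hxys, heq⟩ := hxy'
          have hx : f x = x' := congrArg Prod.fst heq
          have hy : f y = y' := congrArg Prod.snd heq
          obtain ⟨cG, hcG⟩ := secclass' G'
          obtain ⟨cH, hcH⟩ := secclass' H'
          obtain ⟨dG, hdG⟩ := gclass g (mkSec e0 x)
          obtain ⟨dH, hdH⟩ := gclass g (mkSec e0 y)
          have hG' : g (mkSec e0 x) = G' := by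
            apply Subtype.ext
            have h1 := hcompat (mkSec e0 x) x (he0.2.1 x)
            rw [hdG, hcG]
            rw [eClass_eq he0'p (hdG ▸ h1)]
            exact (eClass_eq he0'p (by rw [hx]; rw [hcG] at hx'; exact hx')).symm
          have hH' : g (mkSec e0 y) = H' := by
            apply Subtype.ext
            have h1 := hcompat (mkSec e0 y) y (he0.2.1 y)
            rw [hdH, hcH]
            rw [eClass_eq he0'p (hdH ▸ h1)]
            exact (eClass_eq he0'p (by rw [hy]; rw [hcH] at hy'; exact hy')).symm
          refine ⟨(mkSec e0 x, mkSec e0 y), ⟨x, he0.2.1 x, y, he0.2.1 y, hxys⟩, ?_⟩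
          show (g (mkSec e0 x), g (mkSec e0 y)) = (G', H')
          rw [hG', hH']
      refine ⟨⟨⟨ginj, gsurj⟩, grel'⟩, ?_⟩
      apply Subtype.ext
      obtain ⟨d, hd⟩ := gclass g (mkSec e0 α)
      have h1 := hcompat (mkSec e0 α) α (he0.2.1 α)
      rw [hfα] at h1
      show (g (mkSec e0 α)).1 = eClass e0' α'
      rw [hd]
      exact eClass_eq he0'p (hd ▸ h1)
    · rintro ⟨hg, hgα⟩
      have himg : ∀ β : Ω, ∃ β', β' ∈ (g (mkSec e0 β)).1 ∧ (β = α → β' = α') := by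
        intro β
        by_cases hβα : β = α
        · subst hβα
          refine ⟨α', ?_, fun _ => rfl⟩
          have hx : g (mkSec e0 β) = mkSec e0' α' := hgα
          rw [hx]
          exact he0'p.2.1 α'
        · obtain ⟨c, hc⟩ := gclass g (mkSec e0 β)
          exact ⟨c, by rw [hc]; exact he0'p.2.1 c, fun hcontr => absurd hcontr hβα⟩
      choose imgpt himg1 himg2 using himg
      have hDex : ∀ β : Ω, ∃ h : ↥(eClass e1 β) → ↥(eClass e1' (imgpt β)),
          KeyProp X φ e0 e0' e1 e1' g β (imgpt β) h ∧
          h ⟨β, he1.2.1 β⟩ = ⟨imgpt β, he1'p.2.1 (imgpt β)⟩ :=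
        fun β => exists_keyprop g hg β (imgpt β) (himg1 β)
      choose D hD1 hD2 using hDex
      have fcong : ∀ (β₁ β₂ : Ω) (hb : β₁ = β₂) (a : Ω) (h₁ : a ∈ eClass e1 β₁)
          (h₂ : a ∈ eClass e1 β₂), (D β₁ ⟨a, h₁⟩).1 = (D β₂ ⟨a, h₂⟩).1 := by
        rintro β₁ β₂ rfl a h₁ h₂
        rfl
      have hA : ∀ a : Ω, ∃ (β : Ω) (β' : Ω') (h : ↥(eClass e1 β) → ↥(eClass e1' β'))
          (ha : a ∈ eClass e1 β), KeyProp X φ e0 e0' e1 e1' g β β' h ∧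
          ∀ b (hb : b ∈ eClass e1 β),
            (fun a => (D (repFn e1 he1.2.1 α a) ⟨a, repFn_mem he1 α a⟩).1) b
              = (h ⟨b, hb⟩).1 := by
        intro a
        refine ⟨repFn e1 he1.2.1 α a, imgpt _, D _, repFn_mem he1 α a, hD1 _, ?_⟩
        intro b hb
        show (D (repFn e1 he1.2.1 α b) ⟨b, repFn_mem he1 α b⟩).1
          = (D (repFn e1 he1.2.1 α a) ⟨b, hb⟩).1
        have hab : (a, b) ∈ e1 :=
          he1.2.2.2 _ _ _ (he1.2.2.1 _ (repFn_mem he1 α a)) hb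
        exact fcong _ _ (repFn_congr he1 α hab).symm b _ _
      obtain ⟨hfiso, hcompat⟩ :=
        glue g hg (fun a => (D (repFn e1 he1.2.1 α a) ⟨a, repFn_mem he1 α a⟩).1) hA
      refine ⟨_, hfiso, ?_, fun G a ha => hcompat G a ha⟩
      show (D (repFn e1 he1.2.1 α α) ⟨α, repFn_mem he1 α α⟩).1 = α'
      have hrepα : repFn e1 he1.2.1 α α = α := by
        rw [repFn, if_pos (he1.2.1 α)]
      rw [fcong _ _ hrepα α (repFn_mem he1 α α) (he1.2.1 α), hD2 α]
      exact himg2 α rfl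
  · -- part (ii)
    intro X1 hX1 X1' hX1' φ1 hφ1
    ext h
    simp only [Set.mem_setOf_eq]
    constructor
    · rintro ⟨f, hfiso, hfα, hrest⟩
      have hfbij : Function.Bijective f := hfiso.1
      have hfrel : ∀ s ∈ X.S, relImage f s = φ s := hfiso.2
      have hmemiff : ∀ a : Ω, a ∈ eClass e1 α ↔ f a ∈ eClass e1' α' := by
        intro a
        constructor
        · intro ha
          obtain ⟨u, hu, hau⟩ := X.cover (α, a)
          have hue : u ⊆ e1 := he1.1 u hu ⟨(α, a), hau, ha⟩
          have hmem : (f α, f a) ∈ φ u := by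
            rw [← hfrel u hu]; exact ⟨(α, a), hau, rfl⟩
          rw [hfα] at hmem
          show (α', f a) ∈ e1'
          rw [he1']
          exact mem_algImage.mpr ⟨u, hu, hue, hmem⟩
        · intro ha'
          have hmem : (α', f a) ∈ e1' := ha'
          rw [he1'] at hmem
          obtain ⟨u, hu, hue, hu'⟩ := mem_algImage.mp hmem
          rw [← hfrel u hu] at hu'
          obtain ⟨⟨x, y⟩, hxy, heq⟩ := hu'
          have hx : x = α := hfbij.injective (by rw [hfα]; exact congrArg Prod.fst heq)
          have hy : y = a := hfbij.injective (congrArg Prod.snd heq)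
          subst hx; subst hy
          exact hue hxy
      have hbijh : Function.Bijective h := by
        constructor
        · intro d d' hdd
          apply Subtype.ext
          apply hfbij.injective
          rw [← hrest d, ← hrest d', hdd]
        · intro b'
          obtain ⟨a, ha⟩ := hfbij.surjective b'.1
          have haΔ : a ∈ eClass e1 α := (hmemiff a).mpr (by rw [ha]; exact b'.2)
          refine ⟨⟨a, haΔ⟩, ?_⟩
          apply Subtype.ext
          rw [hrest ⟨a, haΔ⟩, ha]
      have hrelh : ∀ t ∈ X1.S, relImage h t = φ1 t := by
        intro t ht
        rw [hX1] at ht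
        obtain ⟨s, hs, rfl, hne⟩ := ht
        rw [hφ1 s hs hne]
        apply Set.Subset.antisymm
        · rintro p ⟨⟨d, d'⟩, hdd, rfl⟩
          show ((h d).1, (h d').1) ∈ φ s
          rw [hrest d, hrest d']
          rw [← hfrel s hs]
          exact ⟨(d.1, d'.1), hdd, rfl⟩
        · rintro ⟨c', d'⟩ hcd
          have hcd2 : (c'.1, d'.1) ∈ φ s := hcd
          rw [← hfrel s hs] at hcd2
          obtain ⟨⟨x, y⟩, hxy, heq⟩ := hcd2
          have hfx : f x = c'.1 := congrArg Prod.fst heq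
          have hfy : f y = d'.1 := congrArg Prod.snd heq
          have hxΔ : x ∈ eClass e1 α := (hmemiff x).mpr (by rw [hfx]; exact c'.2)
          have hyΔ : y ∈ eClass e1 α := (hmemiff y).mpr (by rw [hfy]; exact d'.2)
          refine ⟨(⟨x, hxΔ⟩, ⟨y, hyΔ⟩), hxy, ?_⟩
          have h1 : h ⟨x, hxΔ⟩ = c' :=
            Subtype.ext (by rw [hrest]; exact hfx)
          have h2 : h ⟨y, hyΔ⟩ = d' :=
            Subtype.ext (by rw [hrest]; exact hfy)
          show (h ⟨x, hxΔ⟩, h ⟨y, hyΔ⟩) = (c', d')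
          rw [h1, h2]
      refine ⟨⟨hbijh, hrelh⟩, ?_⟩
      apply Subtype.ext
      rw [hrest ⟨α, he1.2.1 α⟩]
      exact hfα
    · rintro ⟨hiso, hpt⟩
      have hbij : Function.Bijective h := hiso.1
      have hrel : ∀ t ∈ X1.S, relImage h t = φ1 t := hiso.2
      have hre0 : relImage h (restRel (eClass e1 α) e0) = restRel (eClass e1' α') e0' := by
        apply Set.Subset.antisymm
        · rintro p ⟨⟨d, d'⟩, hdd, rfl⟩
          obtain ⟨u, hu, hdu⟩ := X.cover (d.1, d'.1)
          have hue : u ⊆ e0 := he0.1 u hu ⟨(d.1, d'.1), hdu, hdd⟩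
          have htmem : restRel (eClass e1 α) u ∈ X1.S := by
            rw [hX1]; exact ⟨u, hu, rfl, ⟨(d, d'), hdu⟩⟩
          have hmem : (h d, h d') ∈ relImage h (restRel (eClass e1 α) u) :=
            ⟨(d, d'), hdu, rfl⟩
          rw [hrel _ htmem, hφ1 u hu ⟨(d, d'), hdu⟩] at hmem
          show ((h d).1, (h d').1) ∈ e0'
          rw [he0']
          exact mem_algImage.mpr ⟨u, hu, hue, hmem⟩
        · rintro ⟨c', d'⟩ hcd
          have hcd2 : (c'.1, d'.1) ∈ e0' := hcd
          rw [he0'] at hcd2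
          obtain ⟨u, hu, hue, hcu⟩ := mem_algImage.mp hcd2
          obtain ⟨c, rfl⟩ := hbij.surjective c'
          obtain ⟨d, rfl⟩ := hbij.surjective d'
          obtain ⟨t2, ht2, hcd3⟩ := X1.cover (c, d)
          have ht2' := ht2
          rw [hX1] at ht2'
          obtain ⟨s2, hs2, ht2eq, hne2⟩ := ht2'
          subst ht2eq
          have hmem : (h c, h d) ∈ relImage h (restRel (eClass e1 α) s2) :=
            ⟨(c, d), hcd3, rfl⟩
          rw [hrel _ ht2, hφ1 s2 hs2 hne2] at hmem
          have hfeq : φ s2 = φ u :=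
            basis_eq (hφ.bijOn.mapsTo hs2) (hφ.bijOn.mapsTo hu) hmem hcu
          have hseq : s2 = u := hφ.bijOn.injOn hs2 hu hfeq
          refine ⟨(c, d), ?_, rfl⟩
          show (c.1, d.1) ∈ e0
          exact hue (hseq ▸ hcd3)
      have kdef : ∀ Γ : Sec (eClass e1 α) e0, ∃ K : Sec (eClass e1' α') e0',
          ∀ a : ↥(eClass e1 α), a.1 ∈ Γ.1 → (h a).1 ∈ K.1 := by
        intro Γ
        obtain ⟨c, hcΔ, hceq⟩ := Γ.2
        refine ⟨⟨eClass e0' (h ⟨c, hcΔ⟩).1, (h ⟨c, hcΔ⟩).1, (h ⟨c, hcΔ⟩).2, rfl⟩, ?_⟩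
        intro a haΓ
        have hca : (c, a.1) ∈ e0 := by rw [hceq] at haΓ; exact haΓ
        have hmem : (h ⟨c, hcΔ⟩, h a) ∈ relImage h (restRel (eClass e1 α) e0) :=
          ⟨(⟨c, hcΔ⟩, a), hca, rfl⟩
        rw [hre0] at hmem
        exact hmem
      choose k hkprop using kdef
      have hH := H α α' X1 hX1 X1' hX1' φ1 hφ1
      obtain ⟨g, hg, hgα, hgmeets, hgk⟩ := (Set.ext_iff.mp hH k).mpr (by
        simp only [Set.mem_setOf_eq]
        exact ⟨h, hiso, hpt, hre0, hkprop⟩)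
      have himg : ∀ β : Ω, ∃ β', β' ∈ (g (mkSec e0 β)).1 := by
        intro β
        obtain ⟨c, hc⟩ := gclass g (mkSec e0 β)
        exact ⟨c, by rw [hc]; exact he0'p.2.1 c⟩
      choose imgpt himg1 using himg
      have hDex : ∀ β : Ω, ∃ hb : ↥(eClass e1 β) → ↥(eClass e1' (imgpt β)),
          KeyProp X φ e0 e0' e1 e1' g β (imgpt β) hb :=
        fun β => ((exists_keyprop g hg β (imgpt β) (himg1 β)).imp fun _ hp => hp.1)
      choose D hD1 using hDex
      have hKα : KeyProp X φ e0 e0' e1 e1' g α α' h := by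
        apply keyprop_of_iso g α α' X1 hX1 X1' hX1' φ1 hφ1 h hiso
        intro a G haG
        obtain ⟨c, hc⟩ := secclass G
        have hG1 : G.1 = eClass e0 a.1 := by
          rw [hc]
          exact eClass_eq he0 (by rw [← hc]; exact haG)
        have h1 := hkprop ⟨G.1, a.1, a.2, hG1⟩ a haG
        rw [hgk ⟨G.1, a.1, a.2, hG1⟩ G rfl] at h1
        exact h1
      have fcong : ∀ (β₁ β₂ : Ω) (hb : β₁ = β₂) (a : Ω) (h₁ : a ∈ eClass e1 β₁)
          (h₂ : a ∈ eClass e1 β₂), (D β₁ ⟨a, h₁⟩).1 = (D β₂ ⟨a, h₂⟩).1 := by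
        rintro β₁ β₂ rfl a h₁ h₂
        rfl
      have hA : ∀ a : Ω, ∃ (β : Ω) (β' : Ω') (hb : ↥(eClass e1 β) → ↥(eClass e1' β'))
          (ha : a ∈ eClass e1 β), KeyProp X φ e0 e0' e1 e1' g β β' hb ∧
          ∀ b (hbm : b ∈ eClass e1 β),
            (fun a => if haα : a ∈ eClass e1 α then (h ⟨a, haα⟩).1
              else (D (repFn e1 he1.2.1 α a) ⟨a, repFn_mem he1 α a⟩).1) b
              = (hb ⟨b, hbm⟩).1 := by
        intro a
        by_cases haα : a ∈ eClass e1 α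
        · refine ⟨α, α', h, haα, hKα, ?_⟩
          intro b hbm
          show (if hb2 : b ∈ eClass e1 α then (h ⟨b, hb2⟩).1
            else (D (repFn e1 he1.2.1 α b) ⟨b, repFn_mem he1 α b⟩).1) = (h ⟨b, hbm⟩).1
          rw [dif_pos hbm]
        · refine ⟨repFn e1 he1.2.1 α a, imgpt _, D _, repFn_mem he1 α a, hD1 _, ?_⟩
          intro b hbm
          have hbout : ¬(b ∈ eClass e1 α) := by
            intro hbα
            apply haα
            have hrb : (repFn e1 he1.2.1 α a, b) ∈ e1 := hbm
            have hra : (repFn e1 he1.2.1 α a, a) ∈ e1 := repFn_mem he1 α a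
            exact he1.2.2.2 _ _ _ (he1.2.2.2 _ _ _ hbα (he1.2.2.1 _ hrb)) hra
          show (if hb2 : b ∈ eClass e1 α then (h ⟨b, hb2⟩).1
            else (D (repFn e1 he1.2.1 α b) ⟨b, repFn_mem he1 α b⟩).1)
            = (D (repFn e1 he1.2.1 α a) ⟨b, hbm⟩).1
          rw [dif_neg hbout]
          have hab : (a, b) ∈ e1 :=
            he1.2.2.2 _ _ _ (he1.2.2.1 _ (repFn_mem he1 α a)) hbm
          exact fcong _ _ (repFn_congr he1 α hab).symm b _ _
      obtain ⟨hfiso, hcompat⟩ := glue g hg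
        (fun a => if haα : a ∈ eClass e1 α then (h ⟨a, haα⟩).1
          else (D (repFn e1 he1.2.1 α a) ⟨a, repFn_mem he1 α a⟩).1) hA
      refine ⟨_, hfiso, ?_, ?_⟩
      · show (if haα : α ∈ eClass e1 α then (h ⟨α, haα⟩).1
          else (D (repFn e1 he1.2.1 α α) ⟨α, repFn_mem he1 α α⟩).1) = α'
        rw [dif_pos (show α ∈ eClass e1 α from he1.2.1 α)]
        rw [hpt]
      · intro d
        show (h d).1 = (if haα : d.1 ∈ eClass e1 α then (h ⟨d.1, haα⟩).1
          else (D (repFn e1 he1.2.1 α d.1) ⟨d.1, repFn_mem he1 α d.1⟩).1)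
        rw [dif_pos d.2]
end

section
/- Let X be a scheme on Ω satisfying the e₁/e₀-condition, and suppose that (in the notation of the e₁/e₀ setting, with X' = X and φ = id) for all α, α' ∈ Ω one has Iso_{α₀,α'₀}(X₀, X₀, id)^{Δ₀} = Iso_{α,α'}(X_Δ, X_{Δ'}, id_{Δ,Δ'})^{Δ₀}. Then X is schurian if and only if the quotient X₀ = X_{Ω/e₀} is schurian and the restriction X₁ = X_Δ is schurian for some class Δ of e₁. -/
open Set

universe u

namespace CohCfg

variable {A B C : Type u}

lemma my_relImage_comp (f : B → C) (g : A → B) (t : Set (A × A)) :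
    relImage f (relImage g t) = relImage (f ∘ g) t := by
  unfold relImage
  rw [← Set.image_comp]
  rfl

lemma my_prodmap_inj {f : A → B} (hf : Function.Injective f) :
    Function.Injective (fun p : A × A => (f p.1, f p.2)) := by
  intro p q hpq
  have h1 : f p.1 = f q.1 := congrArg Prod.fst hpq
  have h2 : f p.2 = f q.2 := congrArg Prod.snd hpq
  exact Prod.ext (hf h1) (hf h2)

lemma my_relImage_eq_self [Finite A] {f : A → A} (hf : Function.Injective f)
    {t : Set (A × A)} (h : ∀ p ∈ t, (f p.1, f p.2) ∈ t) : relImage f t = t := by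
  have hsub : relImage f t ⊆ t := by
    rintro x ⟨p, hp, rfl⟩
    exact h p hp
  exact Set.eq_of_subset_of_ncard_le hsub
    (Set.ncard_image_of_injective t (my_prodmap_inj hf)).ge (Set.toFinite t)

lemma my_pair_mem_iff {f : A → A} (hf : Function.Injective f) {t : Set (A × A)}
    (h : relImage f t = t) {a b : A} : (f a, f b) ∈ t ↔ (a, b) ∈ t := by
  constructor
  · intro hm
    rw [← h] at hm
    obtain ⟨⟨c, d⟩, hcd, heq⟩ := hm
    have h1 : f c = f a := congrArg Prod.fst heq
    have h2 : f d = f b := congrArg Prod.snd heq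
    rwa [← hf h1, ← hf h2]
  · intro hm
    rw [← h]
    exact ⟨(a, b), hm, rfl⟩

/-- The restriction of a coherent configuration to a class of a parabolic
exists as a coherent configuration. -/
lemma exists_restrictionCfg (X : CohCfg Ω) {e1 : Set (Ω × Ω)}
    (he1 : IsParabolic X e1) (α : Ω) :
    ∃ Y : CohCfg ↥(eClass e1 α), IsRestrictionCfg X (eClass e1 α) Y := by
  haveI : Finite Ω := X.finite
  set Δ : Set Ω := eClass e1 α with hΔ
  have hΔpair : ∀ a b : ↥Δ, (a.1, b.1) ∈ e1 := by
    rintro ⟨a, ha⟩ ⟨b, hb⟩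
    exact he1.2.2.2 a α b (he1.2.2.1 _ ha) hb
  have hsubΩ : ∀ {s : Set (Ω × Ω)}, s ∈ X.S → (restRel Δ s).Nonempty → s ⊆ e1 := by
    rintro s hs ⟨x, hx⟩
    exact he1.1 s hs ⟨(x.1.1, x.2.1), hx, hΔpair x.1 x.2⟩
  have hγΔ : ∀ {s : Set (Ω × Ω)}, s ⊆ e1 → ∀ {a γ : Ω}, a ∈ Δ → (a, γ) ∈ s → γ ∈ Δ := by
    intro s hse a γ ha hmem
    exact he1.2.2.2 α a γ ha (hse hmem)
  have key : ∀ {r s : Set (Ω × Ω)}, r ⊆ e1 →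
      ∀ p : ↥Δ × ↥Δ,
      {γ : ↥Δ | (p.1, γ) ∈ restRel Δ r ∧ (γ, p.2) ∈ restRel Δ s}.ncard =
      {γ : Ω | (p.1.1, γ) ∈ r ∧ (γ, p.2.1) ∈ s}.ncard := by
    intro r s hre p
    rw [← Set.ncard_image_of_injective _ (Subtype.val_injective (p := fun x => x ∈ Δ))]
    congr 1
    ext γ
    constructor
    · rintro ⟨⟨c, hc⟩, ⟨h1, h2⟩, rfl⟩
      exact ⟨h1, h2⟩
    · rintro ⟨h1, h2⟩
      have hγ : γ ∈ Δ := hγΔ hre p.1.2 h1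
      exact ⟨⟨γ, hγ⟩, ⟨h1, h2⟩, rfl⟩
  refine ⟨⟨{t | ∃ s ∈ X.S, t = restRel Δ s ∧ t.Nonempty}, ?_, ?_, ?_, ?_, ?_, ?_, ?_⟩, rfl⟩
  · infer_instance
  · intro p
    obtain ⟨s, hs, hp⟩ := X.cover (p.1.1, p.2.1)
    exact ⟨restRel Δ s, ⟨s, hs, rfl, ⟨p, hp⟩⟩, hp⟩
  · rintro t ⟨s, hs, rfl, -⟩ t' ⟨s', hs', rfl, -⟩ hne
    have hss' : s ≠ s' := by rintro rfl; exact hne rfl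
    have hds := X.disj s hs s' hs' hss'
    ext x
    simp only [Set.mem_inter_iff, Set.mem_empty_iff_false, iff_false, not_and]
    intro h1 h2
    have : (x.1.1, x.2.1) ∈ s ∩ s' := ⟨h1, h2⟩
    rw [hds] at this
    exact this
  · rintro t ⟨s, hs, rfl, hne⟩
    exact hne
  · rintro t ⟨s, hs, rfl, -⟩ ⟨x, hx, hx2⟩ p hp
    have hdiag := X.diag s hs ⟨(x.1.1, x.2.1), hx, by rw [hx2]⟩
    exact Subtype.ext (hdiag (p.1.1, p.2.1) hp)
  · rintro t ⟨s, hs, rfl, ⟨x, hx⟩⟩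
    refine ⟨{p : Ω × Ω | (p.2, p.1) ∈ s}, X.conv s hs, rfl, ⟨(x.2, x.1), hx⟩⟩
  · rintro r ⟨r', hr', rfl, hrne⟩ s ⟨s', hs', rfl, hsne⟩ t ⟨t', ht', rfl, -⟩ p hp q hq
    have hre : r' ⊆ e1 := hsubΩ hr' hrne
    rw [key hre p, key hre q]
    exact X.inum r' hr' s' hs' t' ht' (p.1.1, p.2.1) hp (q.1.1, q.2.1) hq

end CohCfg

open CohCfg in
/-- Corollary: let `X` be a scheme satisfying the `e₁/e₀`-condition such that
(with `X' = X`, `φ = id`) `Iso_{α₀,α'₀}(X₀,X₀,id)^{Δ₀} =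
Iso_{α,α'}(X_Δ,X_{Δ'}, id_{Δ,Δ'})^{Δ₀}` for all `α, α'`.  Then `X` is schurian
iff the quotient `X₀ = X_{Ω/e₀}` is schurian and the restriction `X_Δ` is
schurian for some class `Δ` of `e₁`. -/
theorem stmt_12 {Ω : Type u} (X : CohCfg Ω) (hX : IsScheme X)
    (e0 e1 : Set (Ω × Ω)) (he0 : IsParabolic X e0) (he1 : IsParabolic X e1)
    (h01 : e0 ⊆ e1) (hw : WedgeCond X e0 e1)
    -- the quotient configuration X₀
    (Y0 : CohCfg (Sec (univ : Set Ω) e0)) (hY0 : IsSectionCfg X univ e0 Y0)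
    -- hypothesis (080222q) for X' = X, φ = id
    (H : ∀ (α α' : Ω),
      ∀ X1 : CohCfg ↥(eClass e1 α), IsRestrictionCfg X (eClass e1 α) X1 →
      ∀ X1' : CohCfg ↥(eClass e1 α'), IsRestrictionCfg X (eClass e1 α') X1' →
      ∀ φ1 : Set (↥(eClass e1 α) × ↥(eClass e1 α)) →
             Set (↥(eClass e1 α') × ↥(eClass e1 α')),
        (∀ s ∈ X.S, (restRel (eClass e1 α) s).Nonempty →
           φ1 (restRel (eClass e1 α) s) = restRel (eClass e1 α') s) →
        {k : Sec (eClass e1 α) e0 → Sec (eClass e1 α') e0 |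
          ∃ g ∈ IsoSet Y0 Y0 id,
            g ⟨eClass e0 α, α, mem_univ α, rfl⟩ =
              ⟨eClass e0 α', α', mem_univ α', rfl⟩ ∧
            (∀ G : Sec (univ : Set Ω) e0, (G.1 ∩ eClass e1 α).Nonempty →
              ((g G).1 ∩ eClass e1 α').Nonempty) ∧
            ∀ (Γ : Sec (eClass e1 α) e0) (G : Sec (univ : Set Ω) e0),
              Γ.1 = G.1 → (k Γ).1 = (g G).1} =
        {k : Sec (eClass e1 α) e0 → Sec (eClass e1 α') e0 |
          ∃ h ∈ IsoSet X1 X1' φ1,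
            h ⟨α, he1.2.1 α⟩ = ⟨α', he1.2.1 α'⟩ ∧
            relImage h (restRel (eClass e1 α) e0) = restRel (eClass e1 α') e0 ∧
            ∀ (Γ : Sec (eClass e1 α) e0) (a : ↥(eClass e1 α)),
              a.1 ∈ Γ.1 → (h a).1 ∈ (k Γ).1}) :
    (Schurian X ↔
      (Schurian Y0 ∧ ∃ α : Ω, ∀ X1 : CohCfg ↥(eClass e1 α),
        IsRestrictionCfg X (eClass e1 α) X1 → Schurian X1)) := by
  classical
  haveI : Finite Ω := X.finite
  have e0symm : ∀ {a b : Ω}, (a, b) ∈ e0 → (b, a) ∈ e0 := fun {a b} h => he0.2.2.1 (a, b) h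
  have e0trans : ∀ {a b c : Ω}, (a, b) ∈ e0 → (b, c) ∈ e0 → (a, c) ∈ e0 :=
    fun {a b c} h1 h2 => he0.2.2.2 a b c h1 h2
  have e0refl : ∀ a : Ω, (a, a) ∈ e0 := he0.2.1
  have e1symm : ∀ {a b : Ω}, (a, b) ∈ e1 → (b, a) ∈ e1 := fun {a b} h => he1.2.2.1 (a, b) h
  have e1trans : ∀ {a b c : Ω}, (a, b) ∈ e1 → (b, c) ∈ e1 → (a, c) ∈ e1 :=
    fun {a b c} h1 h2 => he1.2.2.2 a b c h1 h2
  have e1refl : ∀ a : Ω, (a, a) ∈ e1 := he1.2.1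
  let π : Ω → Sec (univ : Set Ω) e0 := fun a => ⟨eClass e0 a, a, mem_univ a, rfl⟩
  have πmem : ∀ a : Ω, a ∈ (π a).1 := fun a => e0refl a
  have classEq0 : ∀ {a b : Ω}, (a, b) ∈ e0 → eClass e0 a = eClass e0 b := by
    intro a b h
    ext c
    exact ⟨fun hc => e0trans (e0symm h) hc, fun hc => e0trans h hc⟩
  have πeq : ∀ {a b : Ω}, (a, b) ∈ e0 → π a = π b := fun {a b} h => Subtype.ext (classEq0 h)
  have πinj : ∀ {a b : Ω}, π a = π b → (a, b) ∈ e0 := by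
    intro a b h
    have h' : eClass e0 a = eClass e0 b := congrArg Subtype.val h
    have : b ∈ eClass e0 a := by rw [h']; exact e0refl b
    exact this
  have secBase : ∀ (G : Sec (univ : Set Ω) e0) (a : Ω), a ∈ G.1 → G = π a := by
    intro G a ha
    obtain ⟨w, -, hG⟩ := G.2
    rw [hG] at ha
    exact Subtype.ext (by rw [hG]; exact classEq0 ha)
  have secNe : ∀ G : Sec (univ : Set Ω) e0, G.1.Nonempty := by
    intro G
    obtain ⟨w, -, hG⟩ := G.2
    exact ⟨w, by rw [hG]; exact e0refl w⟩
  have sameClass0 : ∀ (G : Sec (univ : Set Ω) e0) {a b : Ω}, a ∈ G.1 → b ∈ G.1 → (a, b) ∈ e0 := by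
    intro G a b ha hb
    obtain ⟨w, -, hG⟩ := G.2
    rw [hG] at ha hb
    exact e0trans (e0symm ha) hb
  have secRelMem : ∀ {s : Set (Ω × Ω)} {a b : Ω}, (a, b) ∈ s →
      (π a, π b) ∈ secRel (univ : Set Ω) e0 s := by
    intro s a b h
    exact ⟨a, πmem a, b, πmem b, h⟩
  have secRelS : ∀ {s : Set (Ω × Ω)}, s ∈ X.S → ∀ {a b : Ω}, (a, b) ∈ s →
      secRel (univ : Set Ω) e0 s ∈ Y0.S := by
    intro s hs a b h
    rw [hY0]
    exact ⟨s, hs, rfl, ⟨(π a, π b), secRelMem h⟩⟩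
  have gAutRel : ∀ {g : Sec (univ : Set Ω) e0 → Sec (univ : Set Ω) e0},
      g ∈ IsoSet Y0 Y0 id → ∀ {t}, t ∈ Y0.S → relImage g t = t := by
    intro g hg t ht
    exact hg.2 t ht
  have gPair : ∀ {g : Sec (univ : Set Ω) e0 → Sec (univ : Set Ω) e0},
      g ∈ IsoSet Y0 Y0 id → ∀ {s : Set (Ω × Ω)}, s ∈ X.S → ∀ {a b : Ω}, (a, b) ∈ s →
      (g (π a), g (π b)) ∈ secRel (univ : Set Ω) e0 s := by
    intro g hg s hs a b h
    have him := gAutRel hg (secRelS hs h)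
    rw [← him]
    exact ⟨(π a, π b), secRelMem h, rfl⟩
  have Q1 : ∀ {g : Sec (univ : Set Ω) e0 → Sec (univ : Set Ω) e0},
      g ∈ IsoSet Y0 Y0 id → ∀ {a b c d : Ω}, (a, b) ∈ e1 →
      c ∈ (g (π a)).1 → d ∈ (g (π b)).1 → (c, d) ∈ e1 := by
    intro g hg a b c d hab hc hd
    obtain ⟨s, hs, habs⟩ := X.cover (a, b)
    have hse : s ⊆ e1 := he1.1 s hs ⟨(a, b), habs, hab⟩
    obtain ⟨x, hx, y, hy, hxy⟩ := gPair hg hs habs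
    have h1 : (x, c) ∈ e0 := sameClass0 _ hx hc
    have h2 : (y, d) ∈ e0 := sameClass0 _ hy hd
    exact e1trans (e1trans (e1symm (h01 h1)) (hse hxy)) (h01 h2)
  have Q1' : ∀ {g : Sec (univ : Set Ω) e0 → Sec (univ : Set Ω) e0},
      g ∈ IsoSet Y0 Y0 id → ∀ {a b c d : Ω}, (c, d) ∈ e1 →
      c ∈ (g (π a)).1 → d ∈ (g (π b)).1 → (a, b) ∈ e1 := by
    intro g hg a b c d hcd hc hd
    obtain ⟨s, hs, habs⟩ := X.cover (a, b)
    obtain ⟨x, hx, y, hy, hxy⟩ := gPair hg hs habs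
    have h1 : (x, c) ∈ e0 := sameClass0 _ hx hc
    have h2 : (y, d) ∈ e0 := sameClass0 _ hy hd
    have hxy1 : (x, y) ∈ e1 := e1trans (e1trans (h01 h1) hcd) (e1symm (h01 h2))
    exact he1.1 s hs ⟨(x, y), hxy, hxy1⟩ habs
  have mkφ : ∀ x x' : Ω, ∃ φ1 : Set (↥(eClass e1 x) × ↥(eClass e1 x)) →
      Set (↥(eClass e1 x') × ↥(eClass e1 x')),
      ∀ s ∈ X.S, (restRel (eClass e1 x) s).Nonempty →
        φ1 (restRel (eClass e1 x) s) = restRel (eClass e1 x') s := by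
    intro x x'
    refine ⟨fun t => if h : ∃ s, s ∈ X.S ∧ restRel (eClass e1 x) s = t ∧ t.Nonempty
      then restRel (eClass e1 x') h.choose else ∅, ?_⟩
    intro s hs hne
    have hex : ∃ s', s' ∈ X.S ∧ restRel (eClass e1 x) s' = restRel (eClass e1 x) s ∧
        (restRel (eClass e1 x) s).Nonempty := ⟨s, hs, rfl, hne⟩
    show (if h : ∃ s', s' ∈ X.S ∧ restRel (eClass e1 x) s' = restRel (eClass e1 x) s ∧
        (restRel (eClass e1 x) s).Nonempty then restRel (eClass e1 x') h.choose else ∅) =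
      restRel (eClass e1 x') s
    rw [dif_pos hex]
    obtain ⟨hS, heq, -⟩ := hex.choose_spec
    have hcs : hex.choose = s := by
      by_contra hcon
      have hds := X.disj _ hS s hs hcon
      obtain ⟨z, hz⟩ := hne
      have hz' : z ∈ restRel (eClass e1 x) hex.choose := by rw [heq]; exact hz
      have : (z.1.1, z.2.1) ∈ hex.choose ∩ s := ⟨hz', hz⟩
      rw [hds] at this
      exact this
    rw [hcs]
  have localIso : ∀ g ∈ IsoSet Y0 Y0 id, ∀ x x' : Ω, g (π x) = π x' →
      ∃ h : ↥(eClass e1 x) → ↥(eClass e1 x'),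
        Function.Bijective h ∧
        (∀ s₀ ∈ X.S, ∀ a b : ↥(eClass e1 x), (a.1, b.1) ∈ s₀ → ((h a).1, (h b).1) ∈ s₀) ∧
        (∀ s₀ ∈ X.S, ∀ a b : ↥(eClass e1 x), ((h a).1, (h b).1) ∈ s₀ → (a.1, b.1) ∈ s₀) ∧
        (∀ a : ↥(eClass e1 x), a.1 = x → (h a).1 = x') ∧
        (∀ a : ↥(eClass e1 x), (h a).1 ∈ (g (π a.1)).1) := by
    intro g hg x x' hgx
    obtain ⟨X1, hX1⟩ := exists_restrictionCfg X he1 x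
    obtain ⟨X1', hX1'⟩ := exists_restrictionCfg X he1 x'
    obtain ⟨φ1, hφ1⟩ := mkφ x x'
    have hkex : ∀ Γ : Sec (eClass e1 x) e0, ∃ K : Sec (eClass e1 x') e0,
        ∀ G : Sec (univ : Set Ω) e0, Γ.1 = G.1 → K.1 = (g G).1 := by
      intro Γ
      obtain ⟨a, haΔ, haeq⟩ := Γ.2
      obtain ⟨w, hw⟩ := secNe (g (π a))
      have hx' : x' ∈ (g (π x)).1 := by rw [hgx]; exact πmem x'
      have hwΔ : w ∈ eClass e1 x' := Q1 hg haΔ hx' hw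
      refine ⟨⟨(g (π a)).1, w, hwΔ, congrArg Subtype.val (secBase _ w hw)⟩, ?_⟩
      intro G hG
      have hGa : G = π a := secBase G a (by rw [← hG, haeq]; exact e0refl a)
      rw [hGa]
    have hmem : (fun Γ => (hkex Γ).choose) ∈
        {k : Sec (eClass e1 x) e0 → Sec (eClass e1 x') e0 |
          ∃ g' ∈ IsoSet Y0 Y0 id,
            g' ⟨eClass e0 x, x, mem_univ x, rfl⟩ = ⟨eClass e0 x', x', mem_univ x', rfl⟩ ∧
            (∀ G : Sec (univ : Set Ω) e0, (G.1 ∩ eClass e1 x).Nonempty →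
              ((g' G).1 ∩ eClass e1 x').Nonempty) ∧
            ∀ (Γ : Sec (eClass e1 x) e0) (G : Sec (univ : Set Ω) e0),
              Γ.1 = G.1 → (k Γ).1 = (g' G).1} := by
      refine ⟨g, hg, hgx, ?_, fun Γ => (hkex Γ).choose_spec⟩
      rintro G ⟨a, haG, haΔ⟩
      have hGa : G = π a := secBase G a haG
      obtain ⟨w, hw⟩ := secNe (g G)
      have hx' : x' ∈ (g (π x)).1 := by rw [hgx]; exact πmem x'
      have hwΔ : w ∈ eClass e1 x' := Q1 hg haΔ hx' (by rwa [← hGa])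
      exact ⟨w, hw, hwΔ⟩
    rw [H x x' X1 hX1 X1' hX1' φ1 hφ1] at hmem
    obtain ⟨h, hhIso, hhx, -, hhk⟩ := hmem
    have P1 : ∀ s₀ ∈ X.S, ∀ a b : ↥(eClass e1 x), (a.1, b.1) ∈ s₀ →
        ((h a).1, (h b).1) ∈ s₀ := by
      intro s₀ hs₀ a b hab
      have hne : (restRel (eClass e1 x) s₀).Nonempty := ⟨(a, b), hab⟩
      have hmemS : restRel (eClass e1 x) s₀ ∈ X1.S := by
        rw [hX1]; exact ⟨s₀, hs₀, rfl, hne⟩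
      have him : relImage h (restRel (eClass e1 x) s₀) = restRel (eClass e1 x') s₀ := by
        rw [hhIso.2 _ hmemS, hφ1 s₀ hs₀ hne]
      have : (h a, h b) ∈ restRel (eClass e1 x') s₀ := by
        rw [← him]; exact ⟨(a, b), hab, rfl⟩
      exact this
    refine ⟨h, hhIso.1, P1, ?_, ?_, ?_⟩
    · intro s₀ hs₀ a b hab
      obtain ⟨s2, hs2, hm⟩ := X.cover (a.1, b.1)
      have hm2 : ((h a).1, (h b).1) ∈ s2 := P1 s2 hs2 a b hm
      by_cases heq : s2 = s₀
      · rw [← heq]; exact hm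
      · exfalso
        have hds := X.disj s2 hs2 s₀ hs₀ heq
        have : ((h a).1, (h b).1) ∈ s2 ∩ s₀ := ⟨hm2, hab⟩
        rw [hds] at this
        exact this
    · intro a ha
      have haa : a = ⟨x, he1.2.1 x⟩ := Subtype.ext ha
      rw [haa, hhx]
    · intro a
      have hcomp := hhk ⟨eClass e0 a.1, a.1, a.2, rfl⟩ a (e0refl a.1)
      have hkv := (hkex ⟨eClass e0 a.1, a.1, a.2, rfl⟩).choose_spec (π a.1) rfl
      rw [hkv] at hcomp
      exact hcomp
  constructor
  · -- forward direction
    intro hSch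
    constructor
    · -- Schurian Y0
      intro t ht P hP Q hQ
      rw [hY0] at ht
      obtain ⟨s, hs, rfl, -⟩ := ht
      obtain ⟨a, haP, b, hbP, hab⟩ := hP
      obtain ⟨c, hcQ, d, hdQ, hcd⟩ := hQ
      obtain ⟨f, ⟨fbij, faut⟩, hfeq⟩ := hSch s hs (a, b) hab (c, d) hcd
      have hfa : f a = c := congrArg Prod.fst hfeq
      have hfb : f b = d := congrArg Prod.snd hfeq
      have fmem : ∀ {s₁ : Set (Ω × Ω)}, s₁ ∈ X.S → ∀ {x y : Ω}, (x, y) ∈ s₁ →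
          (f x, f y) ∈ s₁ := by
        intro s₁ hs₁ x y hxy
        rw [← faut s₁ hs₁]
        exact ⟨(x, y), hxy, rfl⟩
      have hf0 : ∀ x y : Ω, (x, y) ∈ e0 ↔ (f x, f y) ∈ e0 := by
        intro x y
        obtain ⟨s₁, hs₁, hm⟩ := X.cover (x, y)
        constructor
        · intro h
          exact he0.1 s₁ hs₁ ⟨(x, y), hm, h⟩ (fmem hs₁ hm)
        · intro h
          exact he0.1 s₁ hs₁ ⟨(f x, f y), fmem hs₁ hm, h⟩ hm
      have himg : ∀ w : Ω, f '' eClass e0 w = eClass e0 (f w) := by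
        intro w
        ext z
        constructor
        · rintro ⟨y, hy, rfl⟩
          exact (hf0 w y).mp hy
        · intro hz
          obtain ⟨y, rfl⟩ := fbij.surjective z
          exact ⟨y, (hf0 w y).mpr hz, rfl⟩
      let Fq : Sec (univ : Set Ω) e0 → Sec (univ : Set Ω) e0 := fun G =>
        ⟨f '' G.1, by
          obtain ⟨w, -, hG⟩ := G.2
          exact ⟨f w, mem_univ _, by rw [hG, himg w]⟩⟩
      have FqInj : Function.Injective Fq := by
        intro G G' hGG
        have hval : f '' G.1 = f '' G'.1 := congrArg Subtype.val hGG
        exact Subtype.ext ((Set.image_injective.mpr fbij.injective) hval)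
      have FqSurj : Function.Surjective Fq := by
        intro G
        obtain ⟨w, -, hG⟩ := G.2
        obtain ⟨y, rfl⟩ := fbij.surjective w
        refine ⟨π y, Subtype.ext ?_⟩
        show f '' (π y).1 = G.1
        rw [hG]
        exact himg y
      have FqPair : ∀ t' ∈ Y0.S, ∀ P' ∈ t', (Fq P'.1, Fq P'.2) ∈ t' := by
        intro t' ht' P' hP'
        rw [hY0] at ht'
        obtain ⟨s₁, hs₁, rfl, -⟩ := ht'
        obtain ⟨x, hx, y, hy, hxy⟩ := hP'
        exact ⟨f x, ⟨x, hx, rfl⟩, f y, ⟨y, hy, rfl⟩, fmem hs₁ hxy⟩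
      refine ⟨Fq, ⟨⟨FqInj, FqSurj⟩, fun t' ht' => my_relImage_eq_self FqInj (FqPair t' ht')⟩, ?_⟩
      have hPa : P.1.1 = eClass e0 a := congrArg Subtype.val (secBase P.1 a haP)
      have hQc : Q.1.1 = eClass e0 c := congrArg Subtype.val (secBase Q.1 c hcQ)
      have hPb : P.2.1 = eClass e0 b := congrArg Subtype.val (secBase P.2 b hbP)
      have hQd : Q.2.1 = eClass e0 d := congrArg Subtype.val (secBase Q.2 d hdQ)
      have hfst : Fq P.1 = Q.1 := Subtype.ext (by
        show f '' P.1.1 = Q.1.1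
        rw [hPa, hQc, himg a, hfa])
      have hsnd : Fq P.2 = Q.2 := Subtype.ext (by
        show f '' P.2.1 = Q.2.1
        rw [hPb, hQd, himg b, hfb])
      exact Prod.ext hfst hsnd
    · -- restrictions are schurian
      obtain ⟨pd, hpd⟩ := X.nonemp _ hX
      refine ⟨pd.1, ?_⟩
      intro X1 hX1
      intro t ht P hP Q hQ
      rw [hX1] at ht
      obtain ⟨s, hs, rfl, -⟩ := ht
      obtain ⟨f, ⟨fbij, faut⟩, hfeq⟩ := hSch s hs (P.1.1, P.2.1) hP (Q.1.1, Q.2.1) hQ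
      have hfa : f P.1.1 = Q.1.1 := congrArg Prod.fst hfeq
      have hfb : f P.2.1 = Q.2.1 := congrArg Prod.snd hfeq
      have fmem : ∀ {s₁ : Set (Ω × Ω)}, s₁ ∈ X.S → ∀ {x y : Ω}, (x, y) ∈ s₁ →
          (f x, f y) ∈ s₁ := by
        intro s₁ hs₁ x y hxy
        rw [← faut s₁ hs₁]
        exact ⟨(x, y), hxy, rfl⟩
      have hf1 : ∀ x y : Ω, (x, y) ∈ e1 ↔ (f x, f y) ∈ e1 := by
        intro x y
        obtain ⟨s₁, hs₁, hm⟩ := X.cover (x, y)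
        constructor
        · intro h
          exact he1.1 s₁ hs₁ ⟨(x, y), hm, h⟩ (fmem hs₁ hm)
        · intro h
          exact he1.1 s₁ hs₁ ⟨(f x, f y), fmem hs₁ hm, h⟩ hm
      have mapsΔ : ∀ x : Ω, x ∈ eClass e1 pd.1 ↔ f x ∈ eClass e1 pd.1 := by
        intro x
        constructor
        · intro hx
          have h1 : (P.1.1, x) ∈ e1 := e1trans (e1symm P.1.2) hx
          have h2 := (hf1 _ _).mp h1
          rw [hfa] at h2
          exact e1trans Q.1.2 h2
        · intro hx
          have h2 : (f P.1.1, f x) ∈ e1 := by rw [hfa]; exact e1trans (e1symm Q.1.2) hx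
          exact e1trans P.1.2 ((hf1 _ _).mpr h2)
      let w : ↥(eClass e1 pd.1) → ↥(eClass e1 pd.1) :=
        fun xx => ⟨f xx.1, (mapsΔ xx.1).mp xx.2⟩
      have wInj : Function.Injective w :=
        fun x y h => Subtype.ext (fbij.injective (congrArg Subtype.val h))
      have wSurj : Function.Surjective w := by
        intro b
        obtain ⟨y, hy⟩ := fbij.surjective b.1
        exact ⟨⟨y, (mapsΔ y).mpr (by rw [hy]; exact b.2)⟩, Subtype.ext hy⟩
      have wPair : ∀ t' ∈ X1.S, ∀ pp ∈ t', (w pp.1, w pp.2) ∈ t' := by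
        intro t' ht' pp hpp
        rw [hX1] at ht'
        obtain ⟨s₁, hs₁, rfl, -⟩ := ht'
        exact fmem hs₁ hpp
      refine ⟨w, ⟨⟨wInj, wSurj⟩, fun t' ht' => my_relImage_eq_self wInj (wPair t' ht')⟩, ?_⟩
      exact Prod.ext (Subtype.ext hfa) (Subtype.ext hfb)
  · -- backward direction
    rintro ⟨hSchY0, αs, hSchRest⟩
    obtain ⟨X1s, hX1s⟩ := exists_restrictionCfg X he1 αs
    have SchXs : Schurian X1s := hSchRest X1s hX1s
    have getg : ∀ {s : Set (Ω × Ω)}, s ∈ X.S → ∀ {a b c d : Ω}, (a, b) ∈ s → (c, d) ∈ s →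
        ∃ g ∈ IsoSet Y0 Y0 id, g (π a) = π c ∧ g (π b) = π d := by
      intro s hs a b c d h1 h2
      obtain ⟨g, ⟨gbij, gaut⟩, hgeq⟩ := hSchY0 _ (secRelS hs h1) (π a, π b)
        (secRelMem h1) (π c, π d) (secRelMem h2)
      exact ⟨g, ⟨gbij, fun t' ht' => gaut t' ht'⟩,
        congrArg Prod.fst hgeq, congrArg Prod.snd hgeq⟩
    have transfer : ∀ x' : Ω, ∀ X1' : CohCfg ↥(eClass e1 x'),
        IsRestrictionCfg X (eClass e1 x') X1' → Schurian X1' := by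
      intro x' X1' hX1'
      obtain ⟨g₁, hg₁, hg₁a, -⟩ := getg hX (show ((αs, αs) : Ω × Ω) ∈ _ from rfl)
        (show ((x', x') : Ω × Ω) ∈ _ from rfl)
      obtain ⟨j, jbij, jP1, jP1', -, -⟩ := localIso g₁ hg₁ αs x' hg₁a
      obtain ⟨j', hj'l, hj'r⟩ := Function.bijective_iff_has_inverse.mp jbij
      have j'bij : Function.Bijective j' := Function.bijective_iff_has_inverse.mpr ⟨j, hj'r, hj'l⟩
      have hjback : ∀ s₁ ∈ X.S, ∀ pp : ↥(eClass e1 x') × ↥(eClass e1 x'),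
          (pp.1.1, pp.2.1) ∈ s₁ → ((j' pp.1).1, (j' pp.2).1) ∈ s₁ := by
        intro s₁ hs₁ pp hpp
        apply jP1' s₁ hs₁
        show ((j (j' pp.1)).1, (j (j' pp.2)).1) ∈ s₁
        rw [hj'r pp.1, hj'r pp.2]
        exact hpp
      intro t ht P hP Q hQ
      rw [hX1'] at ht
      obtain ⟨s, hs, rfl, -⟩ := ht
      have hP' : ((j' P.1).1, (j' P.2).1) ∈ s := hjback s hs P hP
      have hQ' : ((j' Q.1).1, (j' Q.2).1) ∈ s := hjback s hs Q hQ
      have htS : restRel (eClass e1 αs) s ∈ X1s.S := by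
        rw [hX1s]
        exact ⟨s, hs, rfl, ⟨(j' P.1, j' P.2), hP'⟩⟩
      obtain ⟨wa, ⟨wbij, waut⟩, hweq⟩ := SchXs _ htS (j' P.1, j' P.2) hP' (j' Q.1, j' Q.2) hQ'
      have wmem : ∀ {s₁ : Set (Ω × Ω)}, s₁ ∈ X.S → ∀ aa bb : ↥(eClass e1 αs),
          (aa.1, bb.1) ∈ s₁ → ((wa aa).1, (wa bb).1) ∈ s₁ := by
        intro s₁ hs₁ aa bb hab
        have hmemS : restRel (eClass e1 αs) s₁ ∈ X1s.S := by
          rw [hX1s]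
          exact ⟨s₁, hs₁, rfl, ⟨(aa, bb), hab⟩⟩
        have him := waut _ hmemS
        have : (wa aa, wa bb) ∈ restRel (eClass e1 αs) s₁ := by
          rw [← him]
          exact ⟨(aa, bb), hab, rfl⟩
        exact this
      have ubij : Function.Bijective (fun z => j (wa (j' z))) :=
        (jbij.comp wbij).comp j'bij
      have uPair : ∀ t' ∈ X1'.S, ∀ pp ∈ t',
          ((fun z => j (wa (j' z))) pp.1, (fun z => j (wa (j' z))) pp.2) ∈ t' := by
        intro t' ht' pp hpp
        rw [hX1'] at ht'
        obtain ⟨s₁, hs₁, rfl, -⟩ := ht'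
        exact jP1 s₁ hs₁ _ _ (wmem hs₁ _ _ (hjback s₁ hs₁ pp hpp))
      refine ⟨fun z => j (wa (j' z)),
        ⟨ubij, fun t' ht' => my_relImage_eq_self ubij.injective (uPair t' ht')⟩, ?_⟩
      have hw1 : wa (j' P.1) = j' Q.1 := congrArg Prod.fst hweq
      have hw2 : wa (j' P.2) = j' Q.2 := congrArg Prod.snd hweq
      refine Prod.ext ?_ ?_
      · show j (wa (j' P.1)) = Q.1
        rw [hw1, hj'r]
      · show j (wa (j' P.2)) = Q.2
        rw [hw2, hj'r]
    -- now prove Schurian X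
    intro s hs p hp q hq
    obtain ⟨g, hg, hga, hgb⟩ := getg hs hp hq
    letI st : Setoid Ω := ⟨fun a b => (a, b) ∈ e1,
      ⟨fun a => e1refl a, fun h => e1symm h, fun h1 h2 => e1trans h1 h2⟩⟩
    let rep : Ω → Ω := fun a => (Quotient.mk st a).out
    have hrep1 : ∀ a : Ω, (rep a, a) ∈ e1 := fun a => Quotient.mk_out a
    have hrep2 : ∀ a b : Ω, (a, b) ∈ e1 → rep a = rep b := by
      intro a b h
      show (Quotient.mk st a).out = (Quotient.mk st b).out
      rw [Quotient.sound (a := a) (b := b) h]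
    let base : Ω → Ω := fun a =>
      if (p.1, a) ∈ e1 then p.1 else if (p.2, a) ∈ e1 then p.2 else rep a
    have hbase1 : ∀ a : Ω, (base a, a) ∈ e1 := by
      intro a
      show (if (p.1, a) ∈ e1 then p.1 else if (p.2, a) ∈ e1 then p.2 else rep a, a) ∈ e1
      split_ifs with h1 h2
      · exact h1
      · exact h2
      · exact hrep1 a
    have hbase2 : ∀ a b : Ω, (a, b) ∈ e1 → base a = base b := by
      intro a b hab
      show (if (p.1, a) ∈ e1 then p.1 else if (p.2, a) ∈ e1 then p.2 else rep a) =
        (if (p.1, b) ∈ e1 then p.1 else if (p.2, b) ∈ e1 then p.2 else rep b)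
      by_cases h1 : (p.1, a) ∈ e1
      · rw [if_pos h1, if_pos (e1trans h1 hab)]
      · rw [if_neg h1, if_neg (fun hq' => h1 (e1trans hq' (e1symm hab)))]
        by_cases h2 : (p.2, a) ∈ e1
        · rw [if_pos h2, if_pos (e1trans h2 hab)]
        · rw [if_neg h2, if_neg (fun hq' => h2 (e1trans hq' (e1symm hab)))]
          exact hrep2 a b hab
    have hbasep1 : base p.1 = p.1 := by
      show (if (p.1, p.1) ∈ e1 then p.1 else _) = p.1
      rw [if_pos (e1refl p.1)]
    have tgtEx : ∀ gg : Sec (univ : Set Ω) e0 → Sec (univ : Set Ω) e0,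
        ∀ x : Ω, ∃ c : Ω, gg (π x) = π c := by
      intro gg x
      obtain ⟨c, hc⟩ := secNe (gg (π x))
      exact ⟨c, secBase _ c hc⟩
    have glue : ∀ gg, gg ∈ IsoSet Y0 Y0 id →
        (∀ x : Ω, ∃ x' : Ω, ∃ h : ↥(eClass e1 x) → ↥(eClass e1 x'),
          (∀ s₀ ∈ X.S, ∀ a b : ↥(eClass e1 x), (a.1, b.1) ∈ s₀ → ((h a).1, (h b).1) ∈ s₀) ∧
          (∀ a : ↥(eClass e1 x), (h a).1 ∈ (gg (π a.1)).1) ∧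
          (x = base p.1 → ∀ a : ↥(eClass e1 x), a.1 = p.1 → (h a).1 = q.1) ∧
          (x = base p.2 → ∀ a : ↥(eClass e1 x), a.1 = p.2 → (h a).1 = q.2)) →
        ∃ F : Ω → Ω, (Function.Bijective F ∧ ∀ t ∈ X.S, relImage F t = t) ∧
          (F p.1, F p.2) = q := by
      intro gg hgg hfam
      choose T hloc hP1 hP2 hS1 hS2 using hfam
      let G2 : Ω → Ω → Ω := fun x a => if h : a ∈ eClass e1 x then (hloc x ⟨a, h⟩).1 else a
      let F : Ω → Ω := fun a => G2 (base a) a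
      have hG2 : ∀ x a, ∀ h : a ∈ eClass e1 x, G2 x a = (hloc x ⟨a, h⟩).1 := by
        intro x a h
        show (if h' : a ∈ eClass e1 x then (hloc x ⟨a, h'⟩).1 else a) = _
        rw [dif_pos h]
      have hFdef : ∀ a : Ω, F a = (hloc (base a) ⟨a, hbase1 a⟩).1 :=
        fun a => hG2 (base a) a (hbase1 a)
      have hF1 : ∀ a : Ω, gg (π a) = π (F a) := by
        intro a
        have hmem2 := hP2 (base a) ⟨a, hbase1 a⟩
        apply secBase
        rw [hFdef a]
        exact hmem2
      have hF2 : ∀ a b : Ω, (a, b) ∈ e1 → ∀ s₀ ∈ X.S, (a, b) ∈ s₀ → (F a, F b) ∈ s₀ := by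
        intro a b hab s₀ hs₀ hm
        have hx : base a = base b := hbase2 a b hab
        have hbmem : b ∈ eClass e1 (base a) := by rw [hx]; exact hbase1 b
        have hFb : F b = (hloc (base a) ⟨b, hbmem⟩).1 := by
          show G2 (base b) b = _
          rw [← hx]
          exact hG2 (base a) b hbmem
        rw [show ((F a, F b) : Ω × Ω) = ((hloc (base a) ⟨a, hbase1 a⟩).1,
          (hloc (base a) ⟨b, hbmem⟩).1) from by rw [hFdef a, hFb]]
        exact hP1 (base a) s₀ hs₀ ⟨a, hbase1 a⟩ ⟨b, hbmem⟩ hm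
      have hFinj : Function.Injective F := by
        intro a b hFab
        have h1 : gg (π a) = gg (π b) := by rw [hF1 a, hF1 b, hFab]
        have h2 : (a, b) ∈ e0 := πinj (hgg.1.injective h1)
        obtain ⟨t₀, ht₀, hm⟩ := X.cover (a, b)
        have hFm : (F a, F b) ∈ t₀ := hF2 a b (h01 h2) t₀ ht₀ hm
        have hdiag := X.diag t₀ ht₀ ⟨(F a, F b), hFm, hFab⟩
        exact hdiag (a, b) hm
      have hFpair : ∀ t ∈ X.S, ∀ pp ∈ t, (F pp.1, F pp.2) ∈ t := by
        rintro t ht ⟨pa, pb⟩ hpp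
        by_cases hcap : (t ∩ e1).Nonempty
        · exact hF2 pa pb (he1.1 t ht hcap hpp) t ht hpp
        · obtain ⟨c, hc, d, hd, hcd⟩ := gPair hgg ht hpp
          have hfa : F pa ∈ (gg (π pa)).1 := by rw [hF1 pa]; exact πmem (F pa)
          have hfb : F pb ∈ (gg (π pb)).1 := by rw [hF1 pb]; exact πmem (F pb)
          have h1 : (c, F pa) ∈ e0 := sameClass0 _ hc hfa
          have h2 : (d, F pb) ∈ e0 := sameClass0 _ hd hfb
          exact hw t ht (Set.not_nonempty_iff_eq_empty.mp hcap) (c, d) hcd (F pa) (F pb) h1 h2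
      have hFbij : Function.Bijective F := Finite.injective_iff_bijective.mp hFinj
      refine ⟨F, ⟨hFbij, fun t ht => my_relImage_eq_self hFinj (hFpair t ht)⟩, ?_⟩
      have hqa : F p.1 = q.1 := by
        rw [hFdef p.1]
        exact hS1 (base p.1) rfl ⟨p.1, hbase1 p.1⟩ rfl
      have hqb : F p.2 = q.2 := by
        rw [hFdef p.2]
        exact hS2 (base p.2) rfl ⟨p.2, hbase1 p.2⟩ rfl
      exact Prod.ext hqa hqb
    by_cases hcap : (s ∩ e1).Nonempty
    · -- case s ⊆ e1
      have hsub : s ⊆ e1 := he1.1 s hs hcap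
      have hpe1 : (p.1, p.2) ∈ e1 := hsub hp
      have hqe1 : (q.1, q.2) ∈ e1 := hsub hq
      obtain ⟨h0, h0bij, h0P1, h0P1', h0map, h0cmp⟩ := localIso g hg p.1 q.1 hga
      obtain ⟨X1', hX1'⟩ := exists_restrictionCfg X he1 q.1
      have SchX1' := transfer q.1 X1' hX1'
      have hpairs : ((h0 ⟨p.1, e1refl p.1⟩).1, (h0 ⟨p.2, hpe1⟩).1) ∈ s :=
        h0P1 s hs ⟨p.1, e1refl p.1⟩ ⟨p.2, hpe1⟩ hp
      have hmap1 : (h0 ⟨p.1, e1refl p.1⟩).1 = q.1 := h0map ⟨p.1, e1refl p.1⟩ rfl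
      have htS' : restRel (eClass e1 q.1) s ∈ X1'.S := by
        rw [hX1']
        exact ⟨s, hs, rfl, ⟨(h0 ⟨p.1, e1refl p.1⟩, h0 ⟨p.2, hpe1⟩), hpairs⟩⟩
      obtain ⟨u, ⟨ubij, uaut⟩, hueq⟩ := SchX1' _ htS'
        (h0 ⟨p.1, e1refl p.1⟩, h0 ⟨p.2, hpe1⟩) hpairs
        (⟨q.1, e1refl q.1⟩, ⟨q.2, hqe1⟩) hq
      have hu1 : u (h0 ⟨p.1, e1refl p.1⟩) = ⟨q.1, e1refl q.1⟩ := congrArg Prod.fst hueq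
      have hu2 : u (h0 ⟨p.2, hpe1⟩) = ⟨q.2, hqe1⟩ := congrArg Prod.snd hueq
      have uP1 : ∀ s₀ ∈ X.S, ∀ aa bb : ↥(eClass e1 q.1), (aa.1, bb.1) ∈ s₀ →
          ((u aa).1, (u bb).1) ∈ s₀ := by
        intro s₀ hs₀ aa bb hab
        have hmemS : restRel (eClass e1 q.1) s₀ ∈ X1'.S := by
          rw [hX1']
          exact ⟨s₀, hs₀, rfl, ⟨(aa, bb), hab⟩⟩
        have him := uaut _ hmemS
        have : (u aa, u bb) ∈ restRel (eClass e1 q.1) s₀ := by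
          rw [← him]
          exact ⟨(aa, bb), hab, rfl⟩
        exact this
      have uE0 : ∀ aa bb : ↥(eClass e1 q.1), (aa.1, bb.1) ∈ e0 →
          ((u aa).1, (u bb).1) ∈ e0 := by
        intro aa bb hab
        obtain ⟨s₀, hs₀, hm⟩ := X.cover (aa.1, bb.1)
        exact he0.1 s₀ hs₀ ⟨(aa.1, bb.1), hm, hab⟩ (uP1 s₀ hs₀ aa bb hm)
      have hkuex : ∀ Γ : Sec (eClass e1 q.1) e0, ∃ K : Sec (eClass e1 q.1) e0,
          ∀ aa : ↥(eClass e1 q.1), aa.1 ∈ Γ.1 → (u aa).1 ∈ K.1 := by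
        intro Γ
        obtain ⟨c, hcΔ, hceq⟩ := Γ.2
        refine ⟨⟨eClass e0 (u ⟨c, hcΔ⟩).1, (u ⟨c, hcΔ⟩).1, (u ⟨c, hcΔ⟩).2, rfl⟩, ?_⟩
        intro aa haa
        have hca : (c, aa.1) ∈ e0 := by rw [hceq] at haa; exact haa
        exact uE0 ⟨c, hcΔ⟩ aa hca
      obtain ⟨φu, hφu⟩ := mkφ q.1 q.1
      have hmemu : (fun Γ => (hkuex Γ).choose) ∈
          {k : Sec (eClass e1 q.1) e0 → Sec (eClass e1 q.1) e0 |
            ∃ h ∈ IsoSet X1' X1' φu,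
              h ⟨q.1, he1.2.1 q.1⟩ = ⟨q.1, he1.2.1 q.1⟩ ∧
              relImage h (restRel (eClass e1 q.1) e0) = restRel (eClass e1 q.1) e0 ∧
              ∀ (Γ : Sec (eClass e1 q.1) e0) (a : ↥(eClass e1 q.1)),
                a.1 ∈ Γ.1 → (h a).1 ∈ (k Γ).1} := by
        refine ⟨u, ⟨ubij, ?_⟩, ?_, ?_, fun Γ => (hkuex Γ).choose_spec⟩
        · intro t' ht'
          have ht'' := ht'
          rw [hX1'] at ht''
          obtain ⟨s₀, hs₀, rfl, hne⟩ := ht''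
          rw [uaut _ ht', hφu s₀ hs₀ hne]
        · have hmm : h0 ⟨p.1, e1refl p.1⟩ = ⟨q.1, he1.2.1 q.1⟩ := Subtype.ext hmap1
          exact hmm ▸ hu1
        · refine my_relImage_eq_self ubij.injective ?_
          rintro ⟨aa, bb⟩ hab
          exact uE0 aa bb hab
      rw [← H q.1 q.1 X1' hX1' X1' hX1' φu hφu] at hmemu
      obtain ⟨v, hv, hvq, -, hvk⟩ := hmemu
      have hgg : (v ∘ g) ∈ IsoSet Y0 Y0 id := by
        refine ⟨hv.1.comp hg.1, ?_⟩
        intro t ht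
        show relImage (v ∘ g) t = t
        rw [← my_relImage_comp, gAutRel hg ht, gAutRel hv ht]
      have hcomp : ∀ aa : ↥(eClass e1 p.1), (u (h0 aa)).1 ∈ ((v ∘ g) (π aa.1)).1 := by
        intro aa
        have h1 : g (π aa.1) = π (h0 aa).1 := secBase _ _ (h0cmp aa)
        have h2 := hvk ⟨eClass e0 (h0 aa).1, (h0 aa).1, (h0 aa).2, rfl⟩ (π (h0 aa).1) rfl
        have h3 := (hkuex ⟨eClass e0 (h0 aa).1, (h0 aa).1, (h0 aa).2, rfl⟩).choose_spec
          (h0 aa) (e0refl (h0 aa).1)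
        rw [h2] at h3
        show (u (h0 aa)).1 ∈ (v (g (π aa.1))).1
        rw [h1]
        exact h3
      refine glue (v ∘ g) hgg ?_
      intro x
      by_cases hxp : x = p.1
      · subst hxp
        refine ⟨q.1, fun aa => u (h0 aa), ?_, hcomp, ?_, ?_⟩
        · intro s₀ hs₀ aa bb hab
          exact uP1 s₀ hs₀ _ _ (h0P1 s₀ hs₀ aa bb hab)
        · rintro - aa haa
          have haa' : aa = ⟨p.1, e1refl p.1⟩ := Subtype.ext haa
          rw [haa']
          exact congrArg Subtype.val hu1
        · rintro - aa haa
          have haa' : aa = ⟨p.2, hpe1⟩ := Subtype.ext haa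
          rw [haa']
          exact congrArg Subtype.val hu2
      · obtain ⟨c, hc⟩ := tgtEx (v ∘ g) x
        obtain ⟨h1, h1bij, h1P1, -, -, h1cmp⟩ := localIso (v ∘ g) hgg x c hc
        refine ⟨c, h1, h1P1, h1cmp, ?_, ?_⟩
        · intro hxx
          exact absurd (hxx.trans hbasep1) hxp
        · intro hxx
          exfalso
          apply hxp
          rw [hxx, ← hbase2 p.1 p.2 hpe1, hbasep1]
    · -- case s ∩ e1 = ∅
      have hdis : s ∩ e1 = ∅ := Set.not_nonempty_iff_eq_empty.mp hcap
      have hne12 : ((p.1, p.2) : Ω × Ω) ∉ e1 := by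
        intro hmem'
        have : ((p.1, p.2) : Ω × Ω) ∈ s ∩ e1 := ⟨hp, hmem'⟩
        rw [hdis] at this
        exact this
      have hbasep2 : base p.2 = p.2 := by
        show (if (p.1, p.2) ∈ e1 then p.1 else if (p.2, p.2) ∈ e1 then p.2 else rep p.2) = p.2
        rw [if_neg hne12, if_pos (e1refl p.2)]
      refine glue g hg ?_
      intro x
      by_cases hxp : x = p.1
      · subst hxp
        obtain ⟨h1, h1bij, h1P1, -, h1map, h1cmp⟩ := localIso g hg p.1 q.1 hga
        refine ⟨q.1, h1, h1P1, h1cmp, ?_, ?_⟩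
        · rintro - aa haa
          exact h1map aa haa
        · intro hxx
          exfalso
          apply hne12
          rw [hbasep2] at hxx
          rw [← hxx]
          exact e1refl p.1
      · by_cases hxq : x = p.2
        · subst hxq
          obtain ⟨h1, h1bij, h1P1, -, h1map, h1cmp⟩ := localIso g hg p.2 q.2 hgb
          refine ⟨q.2, h1, h1P1, h1cmp, ?_, ?_⟩
          · intro hxx
            exfalso
            exact hxp (hxx.trans hbasep1)
          · rintro - aa haa
            exact h1map aa haa
        · obtain ⟨c, hc⟩ := tgtEx g x
          obtain ⟨h1, h1bij, h1P1, -, -, h1cmp⟩ := localIso g hg x c hc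
          refine ⟨c, h1, h1P1, h1cmp, ?_, ?_⟩
          · intro hxx
            exact absurd (hxx.trans hbasep1) hxp
          · intro hxx
            exact absurd (hxx.trans hbasep2) hxq
end
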